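/- arXiv:math/0503517 — 8 statements merged into one kernel-verified Lean document; each statement's English description precedes it below -/
import Mathlib

section
/- For every scenery ξ : ℤ → {0,1} with ξ(0) = φ(0), there exists a unique nearest-neighbor walk R : ℤ → ℤ such that R(0) = 0 and φ(R(k)) = ξ(k) for all k ∈ ℤ. -/
/-!
The two neighbours of every site carry different colours, so from any site there is exactly one
step to a neighbour of a prescribed colour. Hence, starting from `R 0 = 0`, the values `R (t + 1)`
for `t ≥ 0` and `R (t - 1)` for `t ≤ 0` are forced one at a time: this both defines the walk and
shows it is unique.
-/

def neighborOfColor (φ : ℤ → Bool) (x : ℤ) (c : Bool) : ℤ :=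
  if φ (x + 1) = c then x + 1 else x - 1

section NeighborOfColor

variable {φ : ℤ → Bool}

theorem abs_neighborOfColor_sub (x : ℤ) (c : Bool) :
    |neighborOfColor φ x c - x| = 1 := by
  unfold neighborOfColor
  split_ifs <;> simp

theorem color_neighborOfColor (hφ : ∀ x, φ (x - 1) ≠ φ (x + 1)) (x : ℤ) (c : Bool) :
    φ (neighborOfColor φ x c) = c := by
  unfold neighborOfColor
  split_ifs with h
  · exact h
  · have := hφ x
    cases c <;> simp_all

theorem eq_neighborOfColor (hφ : ∀ x, φ (x - 1) ≠ φ (x + 1)) {x z : ℤ} {c : Bool}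
    (hzx : |z - x| = 1) (hz : φ z = c) : z = neighborOfColor φ x c := by
  unfold neighborOfColor
  rcases (abs_eq zero_le_one).mp hzx with h | h
  · obtain rfl : z = x + 1 := by omega
    rw [if_pos hz]
  · obtain rfl : z = x - 1 := by omega
    rw [if_neg (hz ▸ (hφ x).symm)]

end NeighborOfColor

def walkOf (φ ξ : ℤ → Bool) (x₀ : ℤ) (t : ℤ) : ℤ :=
  if t = 0 then x₀
  else if 0 < t then neighborOfColor φ (walkOf φ ξ x₀ (t - 1)) (ξ t)
  else neighborOfColor φ (walkOf φ ξ x₀ (t + 1)) (ξ t)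
termination_by t.natAbs
decreasing_by all_goals omega

section WalkOf

variable {φ ξ : ℤ → Bool} {x₀ : ℤ}

theorem walkOf_zero : walkOf φ ξ x₀ 0 = x₀ := by
  rw [walkOf, if_pos rfl]

theorem walkOf_of_pos {t : ℤ} (ht : 0 < t) :
    walkOf φ ξ x₀ t = neighborOfColor φ (walkOf φ ξ x₀ (t - 1)) (ξ t) := by
  rw [walkOf, if_neg ht.ne', if_pos ht]

theorem walkOf_of_neg {t : ℤ} (ht : t < 0) :
    walkOf φ ξ x₀ t = neighborOfColor φ (walkOf φ ξ x₀ (t + 1)) (ξ t) := by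
  rw [walkOf, if_neg ht.ne, if_neg ht.not_gt]

theorem abs_walkOf_add_one_sub (t : ℤ) :
    |walkOf φ ξ x₀ (t + 1) - walkOf φ ξ x₀ t| = 1 := by
  rcases le_or_gt 0 t with ht | ht
  · rw [walkOf_of_pos (by omega), add_sub_cancel_right]
    exact abs_neighborOfColor_sub _ _
  · rw [walkOf_of_neg ht, abs_sub_comm]
    exact abs_neighborOfColor_sub _ _

theorem color_walkOf (hφ : ∀ x, φ (x - 1) ≠ φ (x + 1)) (h₀ : φ x₀ = ξ 0) (t : ℤ) :
    φ (walkOf φ ξ x₀ t) = ξ t := by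
  rcases lt_trichotomy t 0 with ht | rfl | ht
  · rw [walkOf_of_neg ht, color_neighborOfColor hφ]
  · rwa [walkOf_zero]
  · rw [walkOf_of_pos ht, color_neighborOfColor hφ]

theorem eq_walkOf (hφ : ∀ x, φ (x - 1) ≠ φ (x + 1)) {R : ℤ → ℤ} (hR₀ : R 0 = x₀)
    (hR : ∀ t, |R (t + 1) - R t| = 1) (hRξ : ∀ t, φ (R t) = ξ t) :
    R = walkOf φ ξ x₀ := by
  funext t
  induction t using Int.induction_on with
  | zero => rw [hR₀, walkOf_zero]
  | succ i ih =>
    rw [walkOf_of_pos (by omega), add_sub_cancel_right, ← ih]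
    exact eq_neighborOfColor hφ (hR i) (hRξ _)
  | pred i ih =>
    have hstep := hR (-i - 1)
    rw [sub_add_cancel, abs_sub_comm] at hstep
    rw [walkOf_of_neg (by omega), sub_add_cancel, ← ih]
    exact eq_neighborOfColor hφ hstep (hRξ _)

end WalkOf

theorem existsUnique_walk_of_neighbors_ne {φ : ℤ → Bool}
    (hφ : ∀ x, φ (x - 1) ≠ φ (x + 1)) (ξ : ℤ → Bool) {x₀ : ℤ} (h₀ : φ x₀ = ξ 0) :
    ∃! R : ℤ → ℤ, R 0 = x₀ ∧ (∀ t, |R (t + 1) - R t| = 1) ∧ ∀ k, φ (R k) = ξ k :=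
  ⟨walkOf φ ξ x₀,
    ⟨walkOf_zero, abs_walkOf_add_one_sub, color_walkOf hφ h₀⟩,
    fun _ ⟨hR₀, hR, hRξ⟩ => eq_walkOf hφ hR₀ hR hRξ⟩

theorem neighbors_ne_of_periodic_four {φ : ℤ → Bool} (hper : Function.Periodic φ 4)
    (hφ : (φ 0 = false ∧ φ 1 = false ∧ φ 2 = true ∧ φ 3 = true) ∨
          (φ 0 = true ∧ φ 1 = true ∧ φ 2 = false ∧ φ 3 = false)) (x : ℤ) :
    φ (x - 1) ≠ φ (x + 1) := by
  have hmod (y : ℤ) : φ y = φ (y % 4) := by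
    rw [Int.emod_def, mul_comm]; exact (hper.sub_int_mul_eq _).symm
  rw [hmod (x - 1), hmod (x + 1)]
  have hx : x % 4 = 0 ∨ x % 4 = 1 ∨ x % 4 = 2 ∨ x % 4 = 3 := by omega
  rcases hx with h | h | h | h <;>
  · rw [show (x - 1) % 4 = (x % 4 + 3) % 4 by omega,
      show (x + 1) % 4 = (x % 4 + 1) % 4 by omega, h]
    rcases hφ with ⟨h0, h1, h2, h3⟩ | ⟨h0, h1, h2, h3⟩ <;> norm_num [h0, h1, h2, h3]

/-- For every scenery `ξ` with `ξ 0 = φ 0`, there is a unique nearest-neighbor walk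
`R : ℤ → ℤ` with `R 0 = 0` generating `ξ` on the 4-periodic scenery `φ`. -/
theorem exists_unique_representation
    (φ : ℤ → Bool)
    (hper : ∀ k : ℤ, φ (k + 4) = φ k)
    (hφ : (φ 0 = false ∧ φ 1 = false ∧ φ 2 = true ∧ φ 3 = true) ∨
          (φ 0 = true ∧ φ 1 = true ∧ φ 2 = false ∧ φ 3 = false))
    (ξ : ℤ → Bool) (h0 : ξ 0 = φ 0) :
    ∃! R : ℤ → ℤ, R 0 = 0 ∧ (∀ t : ℤ, |R (t + 1) - R t| = 1) ∧ ∀ k : ℤ, φ (R k) = ξ k :=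
  existsUnique_walk_of_neighbors_ne (neighbors_ne_of_periodic_four hper hφ) ξ h0.symm
end

section
/- If the ξ(k), k ∈ ℤ, are i.i.d. Bernoulli(1/2) random variables, then the increments (R(k+1) − R(k))_{k∈ℤ} of the representation R of ξ as a nearest-neighbor walk are i.i.d. uniform on {−1, +1}; equivalently, (R(k))_{k≥0} and (R(−k))_{k≥0} are two independent simple random walks on ℤ starting at the origin. -/
/-!
Since `R` moves by `±1` from `R 0 = 0`, `R k ≡ k (mod 2)`, and a unit step up from `r` changes
`φ` exactly when `r` is odd. Hence the step of `R` at time `k` is `+1` exactly when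
`ξ k xor ξ (k + 1)` equals the parity of `k`, so it suffices that the xors of consecutive bits
are again independent fair bits. Inductively on the largest index `a`: given all `ξ j` with
`j ≤ a`, which determine the earlier xors, the bit `ξ (a + 1)` is still fair and independent,
so it agrees with the guess `ξ a xor c` with probability `1 / 2`.
-/

open MeasureTheory ProbabilityTheory

/-- The 4-periodic scenery with pattern `(b, b, !b, !b)` at `(0, 1, 2, 3)`. -/
def phiOf (b : Bool) : ℤ → Bool :=
  fun k => if k % 4 = 0 ∨ k % 4 = 1 then b else !b

lemma phiOf_add_one (b : Bool) (r : ℤ) :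
    phiOf b (r + 1) = xor (phiOf b r) (decide (r % 2 = 1)) := by
  rcases (by omega : r % 4 = 0 ∨ r % 4 = 1 ∨ r % 4 = 2 ∨ r % 4 = 3) with h | h | h | h <;>
    simp [phiOf, h, show (r + 1) % 4 = (r % 4 + 1) % 4 by omega, show r % 2 = r % 4 % 2 by omega]

section NearestNeighborWalk

variable {r : ℤ → ℤ}

lemma emod_two_eq_of_abs_sub_eq_one (h0 : r 0 = 0) (hnn : ∀ k, |r (k + 1) - r k| = 1) (k : ℤ) :
    r k % 2 = k % 2 := by
  have step : ∀ k, r (k + 1) % 2 = (r k + 1) % 2 := fun k => by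
    rcases abs_eq zero_le_one |>.1 (hnn k) with hk | hk <;> omega
  induction k using Int.induction_on with
  | zero => simp [h0]
  | succ n ih => have := step n; omega
  | pred n ih => have := step (-n - 1); simp only [sub_add_cancel] at this; omega

lemma sub_eq_ite_xor_of_phiOf_eq {b : Bool} {x : ℤ → Bool} (h0 : r 0 = 0)
    (hnn : ∀ k, |r (k + 1) - r k| = 1) (hrep : ∀ k, phiOf b (r k) = x k) (k : ℤ) :
    r (k + 1) - r k = if xor (x k) (x (k + 1)) = decide (k % 2 = 1) then 1 else -1 := by
  have hpar := emod_two_eq_of_abs_sub_eq_one h0 hnn k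
  rcases abs_eq zero_le_one |>.1 (hnn k) with hk | hk
  · have hup : x (k + 1) = xor (x k) (decide (r k % 2 = 1)) := by
      rw [← hrep, ← hrep, show r (k + 1) = r k + 1 by omega, phiOf_add_one]
    simp [hk, hup, hpar]
  · have hdown : x k = xor (x (k + 1)) (decide (r (k + 1) % 2 = 1)) := by
      rw [← hrep, ← hrep, ← phiOf_add_one, show r (k + 1) + 1 = r k by omega]
    have hne : xor (x k) (x (k + 1)) ≠ decide (k % 2 = 1) := by
      rw [hdown]
      rcases Int.emod_two_eq_zero_or_one k with h | h <;>
        simp [h, show r (k + 1) % 2 = 1 - k % 2 by omega]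
    rw [hk, if_neg hne]

end NearestNeighborWalk

lemma Measurable.xor {α : Type*} {mα : MeasurableSpace α} {f g : α → Bool} (hf : Measurable f)
    (hg : Measurable g) : Measurable fun a => xor (f a) (g a) :=
  (measurable_of_countable fun p : Bool × Bool => p.1 ^^ p.2).comp (hf.prodMk hg)

namespace ProbabilityTheory

variable {Ω : Type*} {mΩ : MeasurableSpace Ω} {P : Measure Ω}

lemma measure_setOf_eq_half [IsProbabilityMeasure P] {Y : Ω → Bool} (hY : Measurable Y)
    (h : P {ω | Y ω = true} = 1 / 2) (c : Bool) : P {ω | Y ω = c} = 1 / 2 := by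
  cases c
  · have hT : MeasurableSet {ω | Y ω = true} := hY (measurableSet_singleton true)
    have hcompl : {ω | Y ω = false} = {ω | Y ω = true}ᶜ := by ext ω; simp
    rw [hcompl, prob_compl_eq_one_sub hT, h, one_div, ENNReal.one_sub_inv_two]
  · exact h

lemma Indep.measure_inter_setOf_eq_half {m : MeasurableSpace Ω} (hm : m ≤ mΩ)
    {Y f : Ω → Bool} (hind : Indep m (MeasurableSpace.comap Y inferInstance) P)
    (hY : ∀ c, P {ω | Y ω = c} = 1 / 2) (hf : Measurable[m] f) {E : Set Ω}
    (hE : MeasurableSet[m] E) : P (E ∩ {ω | Y ω = f ω}) = P E * (1 / 2) := by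
  have hT : MeasurableSet[m] {ω | f ω = true} := hf (measurableSet_singleton true)
  have hcoin : ∀ {A : Set Ω} (c : Bool), MeasurableSet[m] A →
      P (A ∩ {ω | Y ω = c}) = P A * (1 / 2) := fun c hA => by
    rw [← hY c]; exact (Indep_iff _ _ P).1 hind _ _ hA ⟨{c}, trivial, rfl⟩
  have hsplit_true : E ∩ {ω | Y ω = f ω} ∩ {ω | f ω = true}
      = E ∩ {ω | f ω = true} ∩ {ω | Y ω = true} := by
    ext ω; cases hfω : f ω <;> simp [hfω, and_comm]
  have hsplit_false : (E ∩ {ω | Y ω = f ω}) \ {ω | f ω = true}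
      = (E \ {ω | f ω = true}) ∩ {ω | Y ω = false} := by
    ext ω; cases hfω : f ω <;> simp [hfω, and_comm]
  rw [← measure_inter_add_sdiff _ (hm _ hT), hsplit_true, hsplit_false, hcoin _ (hE.inter hT),
    hcoin _ (hE.diff hT), ← add_mul, measure_inter_add_sdiff _ (hm _ hT)]

lemma measure_biInter_xor_eq [IsProbabilityMeasure P] {X : ℤ → Ω → Bool}
    (hmeas : ∀ k, Measurable (X k)) (hind : iIndepFun X P)
    (hfair : ∀ k c, P {ω | X k ω = c} = 1 / 2) (c : ℤ → Bool) (s : Finset ℤ) :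
    P (⋂ k ∈ s, {ω | xor (X k ω) (X (k + 1) ω) = c k}) = (1 / 2) ^ s.card := by
  induction s using Finset.induction_on_max with
  | empty => simp
  | insert a s hlt ih =>
    let M : ℤ → MeasurableSpace Ω := fun j => MeasurableSpace.comap (X j) inferInstance
    let F := ⨆ j ∈ {j : ℤ | j ≤ a}, M j
    have hMle : ∀ j, M j ≤ mΩ := fun j => (hmeas j).comap_le
    have hFle : F ≤ mΩ := iSup₂_le fun j _ => hMle j
    have hXF : ∀ j ≤ a, Measurable[F] (X j) := fun j hj =>
      measurable_iff_comap_le.2 (le_biSup M (show j ∈ {j : ℤ | j ≤ a} from hj))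
    have hindF : Indep F (M (a + 1)) P := by
      simpa using indep_iSup_of_disjoint hMle ((iIndepFun_iff_iIndep _ _ P).1 hind)
        (T := {a + 1}) (Set.disjoint_singleton_right.2 (by simp))
    have hE : MeasurableSet[F] (⋂ k ∈ s, {ω | xor (X k ω) (X (k + 1) ω) = c k}) :=
      Finset.measurableSet_biInter s fun k hk =>
        (hXF k (hlt k hk).le).xor (hXF (k + 1) (by linarith [hlt k hk]))
          (measurableSet_singleton _)
    have hxor : {ω | xor (X a ω) (X (a + 1) ω) = c a}
        = {ω | X (a + 1) ω = xor (X a ω) (c a)} := by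
      ext ω
      simp only [Set.mem_ofPred_eq]
      cases X a ω <;> cases X (a + 1) ω <;> cases c a <;> simp
    have hguess : Measurable[F] fun ω => xor (X a ω) (c a) := (hXF a le_rfl).xor measurable_const
    rw [Finset.set_biInter_insert, Set.inter_comm, hxor,
      hindF.measure_inter_setOf_eq_half hFle (hfair (a + 1)) hguess hE,
      ih, Finset.card_insert_of_notMem (fun h => (hlt a h).false), pow_succ]

lemma iIndepFun_and_measure_eq_half_of_measure_biInter [IsProbabilityMeasure P] {ι : Type*}
    {D : ι → Ω → ℤ} (hD : ∀ k ω, D k ω = 1 ∨ D k ω = -1)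
    (hmeas : ∀ k, MeasurableSet {ω | D k ω = 1})
    (h : ∀ s : Finset ι, P (⋂ k ∈ s, {ω | D k ω = 1}) = (1 / 2) ^ s.card) :
    iIndepFun D P ∧ ∀ k, P {ω | D k ω = 1} = 1 / 2 ∧ P {ω | D k ω = -1} = 1 / 2 := by
  have hone : ∀ k, P {ω | D k ω = 1} = 1 / 2 := fun k => by simpa using h {k}
  have hneg : ∀ k, {ω | D k ω = -1} = {ω | D k ω = 1}ᶜ := fun k => by
    ext ω; rcases hD k ω with h | h <;> simp [h]
  refine ⟨?_, fun k => ⟨hone k, ?_⟩⟩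
  · have hset : iIndepSet (fun k => {ω | D k ω = 1}) P :=
      (iIndepSet_iff_meas_biInter hmeas).2 fun s => by
        rw [h, Finset.prod_congr rfl fun k _ => hone k, Finset.prod_const]
    have hD_eq : D = fun k => (fun z : ℤ => 2 * z - 1) ∘ {ω | D k ω = 1}.indicator 1 := by
      funext k ω; rcases hD k ω with h | h <;> simp [Set.indicator, h]
    rw [hD_eq]
    exact hset.iIndepFun_indicator.comp _ fun _ => measurable_of_countable _
  · rw [hneg, prob_compl_eq_one_sub (hmeas k), hone, one_div, ENNReal.one_sub_inv_two]

end ProbabilityTheory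

/-- If the `ξ k` are i.i.d. Bernoulli(1/2), then the increments of the representation `R`
of `ξ` as a nearest-neighbor walk are i.i.d. uniform on `{-1, +1}`; equivalently,
`(R k)_{k ≥ 0}` and `(R (-k))_{k ≥ 0}` are two independent simple random walks starting
at the origin. -/
theorem representation_is_srw
    {Ω : Type*} [MeasurableSpace Ω] (P : Measure Ω) [IsProbabilityMeasure P]
    (ξ : Ω → ℤ → Bool)
    (hξmeas : ∀ k : ℤ, Measurable fun ω => ξ ω k)
    (hξindep : iIndepFun (fun k ω => ξ ω k) P)
    (hξbern : ∀ k : ℤ, P {ω | ξ ω k = true} = 1 / 2)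
    (R : Ω → ℤ → ℤ)
    (hR0 : ∀ ω, R ω 0 = 0)
    (hRnn : ∀ ω, ∀ k : ℤ, |R ω (k + 1) - R ω k| = 1)
    (hRrep : ∀ ω, ∀ k : ℤ, phiOf (ξ ω 0) (R ω k) = ξ ω k) :
    iIndepFun (fun k ω => R ω (k + 1) - R ω k) P ∧
      ∀ k : ℤ, P {ω | R ω (k + 1) - R ω k = 1} = 1 / 2 ∧
        P {ω | R ω (k + 1) - R ω k = -1} = 1 / 2 := by
  have hstep (ω : Ω) (k : ℤ) := sub_eq_ite_xor_of_phiOf_eq (hR0 ω) (hRnn ω) (hRrep ω) k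
  have hup (k : ℤ) : {ω | R ω (k + 1) - R ω k = 1}
      = {ω | xor (ξ ω k) (ξ ω (k + 1)) = decide (k % 2 = 1)} := by
    ext ω; simp [hstep ω k]
  refine iIndepFun_and_measure_eq_half_of_measure_biInter
    (fun k ω => by rw [hstep ω k]; split_ifs <;> simp) (fun k => ?_) (fun s => ?_)
  · rw [hup]
    exact ((hξmeas k).xor (hξmeas (k + 1))) (measurableSet_singleton _)
  · simp_rw [hup]
    exact measure_biInter_xor_eq hξmeas hξindep
      (fun k => measure_setOf_eq_half (hξmeas k) (hξbern k)) _ s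
end

section
/- Let (t1, t2) and (s1, s2) be two crossings by a nearest-neighbor walk T of the same pair (x1, x2). Then either the open intervals (min{t1,t2}, max{t1,t2}) and (min{s1,s2}, max{s1,s2}) are disjoint, or (t1, t2) = (s1, s2). -/
/-- `T : ℤ → ℤ` is a nearest-neighbor walk on the integer interval `D`. -/
def IsNNWalkOn (D : Set ℤ) (T : ℤ → ℤ) : Prop :=
  ∀ t : ℤ, t ∈ D → t + 1 ∈ D → |T (t + 1) - T t| = 1

/-- `(t1, t2)` is a crossing by `T` of the ordered pair `(x1, x2)`:
`(T t1, T t2) = (x1, x2)` and for every time `t` strictly between `t1` and `t2`,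
`T t` lies strictly between `x1` and `x2`. -/
def IsCrossing {α : Type*} [LinearOrder α] (T : α → ℤ) (t1 t2 : α) (x1 x2 : ℤ) : Prop :=
  x1 ≠ x2 ∧ T t1 = x1 ∧ T t2 = x2 ∧
    ∀ t, min t1 t2 < t → t < max t1 t2 → min x1 x2 < T t ∧ T t < max x1 x2

/-- A crossing whose times all lie in the domain `D`. -/
def IsCrossingOn (D : Set ℤ) (T : ℤ → ℤ) (t1 t2 : ℤ) (x1 x2 : ℤ) : Prop :=
  t1 ∈ D ∧ t2 ∈ D ∧ IsCrossing T t1 t2 x1 x2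

/-- Two crossings by a nearest-neighbor walk `T` of the same pair `(x1, x2)` either occupy
disjoint open time intervals, or they are equal. -/
theorem crossings_disjoint_or_eq
    (D : Set ℤ) (hD : D.OrdConnected) (T : ℤ → ℤ) (hT : IsNNWalkOn D T)
    (x1 x2 t1 t2 s1 s2 : ℤ)
    (h1 : IsCrossingOn D T t1 t2 x1 x2) (h2 : IsCrossingOn D T s1 s2 x1 x2) :
    Set.Ioo (min t1 t2) (max t1 t2) ∩ Set.Ioo (min s1 s2) (max s1 s2) = ∅ ∨
      (t1 = s1 ∧ t2 = s2) := by
  obtain ⟨ht1, ht2, hne, hT1, hT2, hbet⟩ := h1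
  obtain ⟨hs1, hs2, _, hS1, hS2, hbet'⟩ := h2
  by_cases hcap : Set.Ioo (min t1 t2) (max t1 t2) ∩ Set.Ioo (min s1 s2) (max s1 s2) = ∅
  · exact Or.inl hcap
  · right
    obtain ⟨u, ⟨ha1, ha2⟩, hc1, hc2⟩ := Set.nonempty_iff_ne_empty.2 hcap
    have notin1 : ∀ v : ℤ, (T v = x1 ∨ T v = x2) →
        ¬ (min t1 t2 < v ∧ v < max t1 t2) := by
      rintro v hv ⟨hl, hr⟩
      have := hbet v hl hr
      rcases hv with h | h <;> omega
    have notin2 : ∀ v : ℤ, (T v = x1 ∨ T v = x2) →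
        ¬ (min s1 s2 < v ∧ v < max s1 s2) := by
      rintro v hv ⟨hl, hr⟩
      have := hbet' v hl hr
      rcases hv with h | h <;> omega
    have A := notin1 s1 (Or.inl hS1)
    have B := notin1 s2 (Or.inr hS2)
    have C := notin2 t1 (Or.inl hT1)
    have Dd := notin2 t2 (Or.inr hT2)
    have hx : x1 ≠ x2 := hne
    have ht12 : t1 ≠ t2 := by rintro rfl; exact hx (hT1.symm.trans hT2)
    have hs12 : s1 ≠ s2 := by rintro rfl; exact hx (hS1.symm.trans hS2)
    have hmin : min t1 t2 = min s1 s2 := by omega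
    have hmax : max t1 t2 = max s1 s2 := by omega
    rcases lt_or_gt_of_ne ht12 with h | h <;> rcases lt_or_gt_of_ne hs12 with h' | h'
    · constructor <;> omega
    · exfalso
      have heq : t1 = s2 := by omega
      exact hx (by rw [← hT1, heq, hS2])
    · exfalso
      have heq : t1 = s2 := by omega
      exact hx (by rw [← hT1, heq, hS2])
    · constructor <;> omega
end

section
/- Let 0 < t1 < t2. Then (t1, t2) is a crossing by T := R∘S of the pair (x1, x2) if and only if there exist k1, k2 ∈ ℤ such that (t1, t2) is a crossing by S of (k1, k2) and (k1, k2) is a crossing by R of (x1, x2). -/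
/-- Discrete IVT (increasing form) for walks with steps at most `+1`. -/
lemma ivt_up (f : ℕ → ℤ) (hf : ∀ t, f (t + 1) ≤ f t + 1) :
    ∀ b a, a ≤ b → ∀ c : ℤ, f a ≤ c → c ≤ f b → ∃ t, a ≤ t ∧ t ≤ b ∧ f t = c := by
  intro b
  induction b with
  | zero =>
    intro a ha c h1 h2
    have : a = 0 := Nat.le_zero.mp ha
    subst this
    exact ⟨0, le_refl _, le_refl _, le_antisymm h1 h2⟩
  | succ b ih =>
    intro a ha c h1 h2
    rcases Nat.lt_or_ge a (b + 1) with h | h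
    · have hab : a ≤ b := Nat.lt_succ_iff.mp h
      rcases le_or_gt c (f b) with hc | hc
      · obtain ⟨t, ht1, ht2, ht3⟩ := ih a hab c h1 hc
        exact ⟨t, ht1, ht2.trans (Nat.le_succ b), ht3⟩
      · have heq : f (b + 1) = c := le_antisymm (by have := hf b; omega) h2
        exact ⟨b + 1, hab.trans (Nat.le_succ b), le_refl _, heq⟩
    · have : a = b + 1 := le_antisymm ha h
      subst this
      exact ⟨b + 1, le_refl _, le_refl _, le_antisymm h1 h2⟩

/-- Discrete IVT for nearest-neighbor walks, unordered endpoints. -/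
lemma walk_ivt (f : ℕ → ℤ) (hf : ∀ t : ℕ, |f (t + 1) - f t| = 1) (a b : ℕ) (hab : a ≤ b)
    (c : ℤ) (h1 : min (f a) (f b) ≤ c) (h2 : c ≤ max (f a) (f b)) :
    ∃ t, a ≤ t ∧ t ≤ b ∧ f t = c := by
  rcases le_total (f a) (f b) with h | h
  · exact ivt_up f (fun t => by have := abs_le.mp (hf t).le; omega) b a hab c
      (by omega) (by omega)
  · obtain ⟨t, ht1, ht2, ht3⟩ :=
      ivt_up (fun t => -f t) (fun t => by show -f (t + 1) ≤ -f t + 1; have := abs_le.mp (hf t).le; omega) b a hab (-c)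
        (by simp; omega) (by simp; omega)
    exact ⟨t, ht1, ht2, by omega⟩

/-- A pair of times `0 < t1 < t2` is a crossing by the composition `R ∘ S` of `(x1, x2)` iff
it is a crossing by `S` of some pair `(k1, k2)` which is itself a crossing by `R`
of `(x1, x2)`. -/
theorem crossing_comp_iff
    (R : ℤ → ℤ) (S : ℕ → ℤ)
    (hR : ∀ k : ℤ, |R (k + 1) - R k| = 1)
    (hS : ∀ t : ℕ, |S (t + 1) - S t| = 1)
    (x1 x2 : ℤ) (t1 t2 : ℕ) (ht1 : 0 < t1) (ht12 : t1 < t2) :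
    IsCrossing (fun t => R (S t)) t1 t2 x1 x2 ↔
      ∃ k1 k2 : ℤ, IsCrossing S t1 t2 k1 k2 ∧ IsCrossing R k1 k2 x1 x2 := by
  constructor
  · rintro ⟨hne, h1, h2, hmid⟩
    have h1' : R (S t1) = x1 := h1
    have h2' : R (S t2) = x2 := h2
    have hmid' : ∀ t, t1 < t → t < t2 → min x1 x2 < R (S t) ∧ R (S t) < max x1 x2 :=
      fun t ha hb => hmid t (by omega) (by omega)
    have hkne : S t1 ≠ S t2 := by
      intro h
      exact hne (by rw [← h1', ← h2', h])
    have hS1 : ∀ t, t1 < t → t < t2 → S t ≠ S t1 := by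
      intro t ha hb h
      have hm := hmid' t ha hb
      rw [h, h1'] at hm
      omega
    have hS2 : ∀ t, t1 < t → t < t2 → S t ≠ S t2 := by
      intro t ha hb h
      have hm := hmid' t ha hb
      rw [h, h2'] at hm
      omega
    refine ⟨S t1, S t2, ⟨hkne, rfl, rfl, ?_⟩, hne, h1', h2', ?_⟩
    · intro t ha hb
      have ha' : t1 < t := by omega
      have hb' : t < t2 := by omega
      have hne1 := hS1 t ha' hb'
      have hne2 := hS2 t ha' hb'
      by_contra hcon
      have hcase : S t < min (S t1) (S t2) ∨ max (S t1) (S t2) < S t := by omega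
      rcases hcase with hlow | hhigh
      · rcases le_or_gt (S t1) (S t2) with hk | hk
        · obtain ⟨t', ha1, ha2, ha3⟩ := walk_ivt S hS t t2 hb'.le (S t1) (by omega) (by omega)
          have hne' : t' ≠ t2 := by intro h; rw [h] at ha3; omega
          exact hS1 t' (lt_of_lt_of_le ha' ha1) (lt_of_le_of_ne ha2 hne') ha3
        · obtain ⟨t', ha1, ha2, ha3⟩ := walk_ivt S hS t1 t ha'.le (S t2) (by omega) (by omega)
          have hne' : t' ≠ t1 := by intro h; rw [h] at ha3; omega
          exact hS2 t' (lt_of_le_of_ne ha1 (Ne.symm hne')) (lt_of_le_of_lt ha2 hb') ha3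
      · rcases le_or_gt (S t1) (S t2) with hk | hk
        · obtain ⟨t', ha1, ha2, ha3⟩ := walk_ivt S hS t1 t ha'.le (S t2) (by omega) (by omega)
          have hne' : t' ≠ t1 := by intro h; rw [h] at ha3; omega
          exact hS2 t' (lt_of_le_of_ne ha1 (Ne.symm hne')) (lt_of_le_of_lt ha2 hb') ha3
        · obtain ⟨t', ha1, ha2, ha3⟩ := walk_ivt S hS t t2 hb'.le (S t1) (by omega) (by omega)
          have hne' : t' ≠ t2 := by intro h; rw [h] at ha3; omega
          exact hS1 t' (lt_of_lt_of_le ha' ha1) (lt_of_le_of_ne ha2 hne') ha3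
    · intro k hka hkb
      obtain ⟨t, hta, htb, hts⟩ := walk_ivt S hS t1 t2 ht12.le k (by omega) (by omega)
      have h1t : t1 ≠ t := by intro h; rw [← h] at hts; omega
      have h2t : t ≠ t2 := by intro h; rw [h] at hts; omega
      have hm := hmid' t (lt_of_le_of_ne hta h1t) (lt_of_le_of_ne htb h2t)
      rw [hts] at hm
      exact hm
  · rintro ⟨k1, k2, ⟨hk, s1, s2, smid⟩, hx, r1, r2, rmid⟩
    refine ⟨hx, ?_, ?_, ?_⟩
    · show R (S t1) = x1
      rw [s1]; exact r1
    · show R (S t2) = x2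
      rw [s2]; exact r2
    · intro t ha hb
      have h := smid t ha hb
      exact rmid (S t) h.1 h.2
end

section
/- Let 0 < t1 < t2. Then (t1, t2) is a straight crossing by T := R∘S of the pair (x1, x2) if and only if there exist k1, k2 ∈ ℤ such that (t1, t2) is a straight crossing by S of (k1, k2) and (k1, k2) is a straight crossing by R of (x1, x2). -/
/-- A straight crossing (time domain `ℕ`): a crossing with `|t1 - t2| = |x1 - x2|`. -/
def IsStraightCrossingN (T : ℕ → ℤ) (t1 t2 : ℕ) (x1 x2 : ℤ) : Prop :=
  IsCrossing T t1 t2 x1 x2 ∧ Nat.dist t1 t2 = (x1 - x2).natAbs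

/-- A straight crossing (time domain `ℤ`): a crossing with `|t1 - t2| = |x1 - x2|`. -/
def IsStraightCrossingZ (T : ℤ → ℤ) (t1 t2 : ℤ) (x1 x2 : ℤ) : Prop :=
  IsCrossing T t1 t2 x1 x2 ∧ (t1 - t2).natAbs = (x1 - x2).natAbs

private lemma walk_bound_nat (S : ℕ → ℤ) (hS : ∀ t : ℕ, |S (t + 1) - S t| = 1) :
    ∀ a b : ℕ, a ≤ b → S b - S a ≤ (b : ℤ) - (a : ℤ) ∧ S a - S b ≤ (b : ℤ) - (a : ℤ) := by
  intro a b hab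
  induction b, hab using Nat.le_induction with
  | base => simp
  | succ n hn ih =>
      have h1 : S (n + 1) - S n ≤ 1 := (hS n) ▸ le_abs_self _
      have h2 : -(1 : ℤ) ≤ S (n + 1) - S n := (hS n) ▸ neg_abs_le _
      obtain ⟨i1, i2⟩ := ih
      constructor <;> · push_cast; linarith

private lemma walk_bound_int_aux (R : ℤ → ℤ) (hR : ∀ k : ℤ, |R (k + 1) - R k| = 1) :
    ∀ (a : ℤ) (n : ℕ), R (a + n) - R a ≤ (n : ℤ) ∧ R a - R (a + n) ≤ (n : ℤ) := by
  intro a n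
  induction n with
  | zero => simp
  | succ m ih =>
      have h := hR (a + m)
      have h1 : R (a + m + 1) - R (a + m) ≤ 1 := by
        calc R (a + m + 1) - R (a + m) ≤ |R (a + m + 1) - R (a + m)| := le_abs_self _
          _ = 1 := h
      have h2 : -(1 : ℤ) ≤ R (a + m + 1) - R (a + m) := by
        calc -(1 : ℤ) = -|R (a + m + 1) - R (a + m)| := by rw [h]
          _ ≤ R (a + m + 1) - R (a + m) := neg_abs_le _
      obtain ⟨i1, i2⟩ := ih
      have he : a + ((m : ℤ) + 1) = a + m + 1 := by ring
      push_cast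
      rw [he]
      constructor <;> linarith

private lemma walk_bound_int (R : ℤ → ℤ) (hR : ∀ k : ℤ, |R (k + 1) - R k| = 1) :
    ∀ a b : ℤ, a ≤ b → R b - R a ≤ b - a ∧ R a - R b ≤ b - a := by
  intro a b hab
  obtain ⟨n, rfl⟩ : ∃ n : ℕ, b = a + n := ⟨(b - a).toNat, by omega⟩
  obtain ⟨i1, i2⟩ := walk_bound_int_aux R hR a n
  omega

private lemma walk_abs_int (R : ℤ → ℤ) (hR : ∀ k : ℤ, |R (k + 1) - R k| = 1)
    (a b : ℤ) : (R a - R b).natAbs ≤ (a - b).natAbs := by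
  rcases le_total a b with h | h
  · obtain ⟨h1, h2⟩ := walk_bound_int R hR a b h
    omega
  · obtain ⟨h1, h2⟩ := walk_bound_int R hR b a h
    omega

private lemma walk_between_nat (S : ℕ → ℤ) (hS : ∀ t : ℕ, |S (t + 1) - S t| = 1)
    {a b : ℕ} (hab : a ≤ b) (h : (S a - S b).natAbs = b - a) :
    ∀ t, a < t → t < b → min (S a) (S b) < S t ∧ S t < max (S a) (S b) := by
  intro t h1 h2
  obtain ⟨b1, b2⟩ := walk_bound_nat S hS a t h1.le
  obtain ⟨c1, c2⟩ := walk_bound_nat S hS t b h2.le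
  omega

private lemma walk_between_int (R : ℤ → ℤ) (hR : ∀ k : ℤ, |R (k + 1) - R k| = 1)
    {a b : ℤ} (hab : a ≤ b) (h : (R a - R b).natAbs = (b - a).natAbs) :
    ∀ k, a < k → k < b → min (R a) (R b) < R k ∧ R k < max (R a) (R b) := by
  intro k h1 h2
  obtain ⟨b1, b2⟩ := walk_bound_int R hR a k h1.le
  obtain ⟨c1, c2⟩ := walk_bound_int R hR k b h2.le
  omega

/-- A pair of times `0 < t1 < t2` is a straight crossing by the composition `R ∘ S` of
`(x1, x2)` iff it is a straight crossing by `S` of some pair `(k1, k2)` which is itself a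
straight crossing by `R` of `(x1, x2)`. -/
theorem straight_crossing_comp_iff
    (R : ℤ → ℤ) (S : ℕ → ℤ)
    (hR : ∀ k : ℤ, |R (k + 1) - R k| = 1)
    (hS : ∀ t : ℕ, |S (t + 1) - S t| = 1)
    (x1 x2 : ℤ) (t1 t2 : ℕ) (ht1 : 0 < t1) (ht12 : t1 < t2) :
    IsStraightCrossingN (fun t => R (S t)) t1 t2 x1 x2 ↔
      ∃ k1 k2 : ℤ, IsStraightCrossingN S t1 t2 k1 k2 ∧ IsStraightCrossingZ R k1 k2 x1 x2 := by
  constructor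
  · rintro ⟨⟨hne, hT1, hT2, hbet⟩, hdist⟩
    have hT1' : R (S t1) = x1 := hT1
    have hT2' : R (S t2) = x2 := hT2
    have hd : Nat.dist t1 t2 = t2 - t1 := Nat.dist_eq_sub_of_le ht12.le
    obtain ⟨hb1, hb2⟩ := walk_bound_nat S hS t1 t2 ht12.le
    have hk_le : (S t1 - S t2).natAbs ≤ t2 - t1 := by omega
    have hx_le : (R (S t1) - R (S t2)).natAbs ≤ (S t1 - S t2).natAbs :=
      walk_abs_int R hR _ _
    have hxx : (R (S t1) - R (S t2)).natAbs = (x1 - x2).natAbs := by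
      rw [hT1', hT2']
    have hkeq : (S t1 - S t2).natAbs = t2 - t1 := by omega
    have hReq : (R (S t1) - R (S t2)).natAbs = (S t1 - S t2).natAbs := by omega
    have hkne : S t1 ≠ S t2 := by
      intro hcon
      rw [hcon] at hkeq
      omega
    have hbetS := walk_between_nat S hS ht12.le hkeq
    refine ⟨S t1, S t2, ⟨⟨hkne, rfl, rfl, ?_⟩, by omega⟩,
      ⟨⟨hne, hT1', hT2', ?_⟩, by omega⟩⟩
    · intro t h1 h2
      exact hbetS t (by omega) (by omega)
    · intro k h1 h2
      rcases le_total (S t1) (S t2) with h | h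
      · have := walk_between_int R hR h (by omega) k (by omega) (by omega)
        rw [hT1', hT2'] at this
        exact this
      · have := walk_between_int R hR h (by omega) k (by omega) (by omega)
        rw [hT1', hT2'] at this
        omega
  · rintro ⟨k1, k2, ⟨⟨hkne, hS1, hS2, hSbet⟩, hSd⟩, ⟨hxne, hR1, hR2, hRbet⟩, hRd⟩
    refine ⟨⟨hxne, ?_, ?_, ?_⟩, by omega⟩
    · show R (S t1) = x1
      rw [hS1]; exact hR1
    · show R (S t2) = x2
      rw [hS2]; exact hR2
    · intro t h1 h2
      have hb := hSbet t h1 h2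
      have := hRbet (S t) (by omega) (by omega)
      exact this
end

section
/- Let 0 < t1 < t2 < t3 < t4 and 0 < x1 < x2 < x3 < x4, and let (t1, t4) be a crossing by R∘S of (x1, x4). Set (k1, k4) := (S(t1), S(t4)) (which is a crossing by R of (x1, x4)). Then (t2, t3) is the first crossing by R∘S of (x2, x3) during (t1, t4) if and only if (t2, t3) is the first crossing by S during (t1, t4) of (k2, k3), where (k2, k3) is the first crossing by R of (x2, x3) during (k1, k4). -/
/-- `(s1, s2)` is the first crossing by `T : ℕ → ℤ` of `(x3, x4)` during the crossing
`(t1, t2)`: it is a crossing of `(x3, x4)` lying in `[min t1 t2, max t1 t2]` and,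
among all such crossings, it is the one closest to `t1`. -/
def IsFirstCrossingDuringN (T : ℕ → ℤ) (t1 t2 s1 s2 : ℕ) (x3 x4 : ℤ) : Prop :=
  IsCrossing T s1 s2 x3 x4 ∧ min t1 t2 ≤ min s1 s2 ∧ max s1 s2 ≤ max t1 t2 ∧
    ∀ u1 u2 : ℕ, IsCrossing T u1 u2 x3 x4 → min t1 t2 ≤ min u1 u2 → max u1 u2 ≤ max t1 t2 →
      Nat.dist s1 t1 ≤ Nat.dist u1 t1

/-- `(s1, s2)` is the first crossing by `T : ℤ → ℤ` of `(x3, x4)` during the crossing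
`(t1, t2)`. -/
def IsFirstCrossingDuringZ (T : ℤ → ℤ) (t1 t2 s1 s2 : ℤ) (x3 x4 : ℤ) : Prop :=
  IsCrossing T s1 s2 x3 x4 ∧ min t1 t2 ≤ min s1 s2 ∧ max s1 s2 ≤ max t1 t2 ∧
    ∀ u1 u2 : ℤ, IsCrossing T u1 u2 x3 x4 → min t1 t2 ≤ min u1 u2 → max u1 u2 ≤ max t1 t2 →
      (s1 - t1).natAbs ≤ (u1 - t1).natAbs

/-!
A crossing of `(x, y)` by `R ∘ S` is exactly a crossing by `S` of a crossing of `(x, y)` by `R`: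
by the discrete intermediate value theorem, `S` stays strictly between its endpoint values during
the crossing and takes every value in between. During `(t1, t4)` the walk `S` stays between
`k1 = S t1` and `k4 = S t4`, so a crossing of `(x2, x3)` by `R ∘ S` there is either a crossing
of `(k2, k3)` by `S`, or starts beyond `k3`; in the second case `S` has already crossed
`(k2, k3)` before. So both notions of first crossing select the same pair.
-/

open Set Order

section Walk

variable {α : Type*} [LinearOrder α] [SuccOrder α] [IsSuccArchimedean α] {T : α → ℤ}

theorem exists_eq_of_mem_uIcc (hT : ∀ t, |T (succ t) - T t| ≤ 1) {p q : α} {c : ℤ}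
    (hc : c ∈ uIcc (T p) (T q)) : ∃ r ∈ uIcc p q, T r = c := by
  wlog hpq : p ≤ q generalizing p q
  · rw [uIcc_comm] at hc ⊢
    exact this hc (le_of_not_ge hpq)
  rw [uIcc_of_le hpq]
  induction hpq using Succ.rec with
  | rfl => exact ⟨p, left_mem_Icc.2 le_rfl, by rw [uIcc_self] at hc; exact hc.symm⟩
  | succ q hpq ih =>
    by_cases hcq : c ∈ uIcc (T p) (T q)
    · obtain ⟨r, hr, hTr⟩ := ih hcq
      exact ⟨r, ⟨hr.1, hr.2.trans (le_succ q)⟩, hTr⟩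
    · refine ⟨succ q, ⟨hpq.trans (le_succ q), le_rfl⟩, ?_⟩
      have := abs_le.1 (hT q)
      simp only [mem_uIcc] at hc hcq
      omega

theorem exists_isCrossing_of_lt [LocallyFiniteOrder α] (hT : ∀ t, |T (succ t) - T t| ≤ 1)
    {p q : α} (hpq : p ≤ q) {y z : ℤ} (hy : T p < y) (hyz : y < z) (hz : z ≤ T q) :
    ∃ w1 w2, IsCrossing T w1 w2 y z ∧ p < w1 ∧ w1 < w2 ∧ w2 ≤ q := by
  classical
  -- `b` is the first time `T` reaches `z`, and `a` the last time before `b` that `T ≤ y`.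
  obtain ⟨b, hb, hb_min⟩ := ((Finset.Icc p q).filter (z ≤ T ·)).exists_min_image id
    ⟨q, by simp [hpq, hz]⟩
  simp only [Finset.mem_filter, Finset.mem_Icc, id, and_imp] at hb hb_min
  obtain ⟨a, ha, ha_max⟩ := ((Finset.Icc p b).filter (T · ≤ y)).exists_max_image id
    ⟨p, by simp [hb.1.1, hy.le]⟩
  simp only [Finset.mem_filter, Finset.mem_Icc, id, and_imp] at ha ha_max
  have hTb : T b = z := by
    obtain ⟨r, hr, hTr⟩ := exists_eq_of_mem_uIcc hT (p := p) (q := b) (c := z)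
      (mem_uIcc.2 (Or.inl ⟨by omega, hb.2⟩))
    rw [uIcc_of_le hb.1.1] at hr
    rwa [← le_antisymm hr.2 (hb_min r hr.1 (hr.2.trans hb.1.2) hTr.ge)]
  have hTa : T a = y := by
    obtain ⟨r, hr, hTr⟩ := exists_eq_of_mem_uIcc hT (p := a) (q := b) (c := y)
      (mem_uIcc.2 (Or.inl ⟨ha.2, by omega⟩))
    rw [uIcc_of_le ha.1.2] at hr
    rwa [← le_antisymm (ha_max r (ha.1.1.trans hr.1) hr.2 hTr.le) hr.1]
  have hab : a < b := lt_of_le_of_ne ha.1.2 (by rintro rfl; omega)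
  refine ⟨a, b, ⟨hyz.ne, hTa, hTb, fun t hat htb => ?_⟩,
    lt_of_le_of_ne ha.1.1 (by rintro rfl; omega), hab, hb.1.2⟩
  rw [min_eq_left hab.le] at hat
  rw [max_eq_right hab.le] at htb
  rw [min_eq_left hyz.le, max_eq_right hyz.le]
  constructor
  · by_contra! h
    exact hat.not_ge (ha_max t (ha.1.1.trans hat.le) htb.le h)
  · by_contra! h
    exact htb.not_ge (hb_min t (ha.1.1.trans hat.le) (htb.le.trans hb.1.2) h)

end Walk

section Crossing

variable {α : Type*} [LinearOrder α]

theorem IsCrossing.comp {S : α → ℤ} {R : ℤ → ℤ} {u v : α} {a b x y : ℤ}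
    (hR : IsCrossing R a b x y) (hS : IsCrossing S u v a b) : IsCrossing (R ∘ S) u v x y := by
  obtain ⟨hxy, rfl, rfl, hRint⟩ := hR
  obtain ⟨-, rfl, rfl, hSint⟩ := hS
  exact ⟨hxy, rfl, rfl, fun t hut htv => hRint (S t) (hSint t hut htv).1 (hSint t hut htv).2⟩

theorem IsCrossing.apply_mem_uIcc {T : α → ℤ} {a b : α} {x y : ℤ} (h : IsCrossing T a b x y)
    ⦃t : α⦄ (ht : t ∈ uIcc a b) : T t ∈ uIcc x y := by
  obtain ⟨-, rfl, rfl, hint⟩ := h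
  rcases eq_or_ne t a with rfl | hta
  · exact left_mem_uIcc
  rcases eq_or_ne t b with rfl | htb
  · exact right_mem_uIcc
  rw [mem_uIcc] at ht
  refine Ioo_subset_Icc_self (hint t ?_ ?_)
  · rcases ht with ⟨h, -⟩ | ⟨h, -⟩
    exacts [min_lt_of_left_lt (h.lt_of_ne' hta), min_lt_of_right_lt (h.lt_of_ne' htb)]
  · rcases ht with ⟨-, h⟩ | ⟨-, h⟩
    exacts [lt_max_of_lt_right (h.lt_of_ne htb), lt_max_of_lt_left (h.lt_of_ne hta)]

theorem isCrossing_neg_iff {T : α → ℤ} {a b : α} {x y : ℤ} :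
    IsCrossing (fun t => -T t) a b (-x) (-y) ↔ IsCrossing T a b x y := by
  simp only [IsCrossing, ne_eq, neg_inj]
  refine and_congr_right' <| and_congr_right' <| and_congr_right' <| forall_congr' fun t =>
    imp_congr_right fun _ => imp_congr_right fun _ => ?_
  omega

end Crossing

theorem isCrossing_comp_neg_iff {T : ℤ → ℤ} {a b x y : ℤ} :
    IsCrossing (fun k => T (-k)) a b x y ↔ IsCrossing T (-a) (-b) x y := by
  refine ⟨fun ⟨hxy, ha, hb, hint⟩ => ⟨hxy, ha, hb, fun k h1 h2 => ?_⟩,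
    fun ⟨hxy, ha, hb, hint⟩ => ⟨hxy, ha, hb, fun k h1 h2 => hint (-k) (by omega) (by omega)⟩⟩
  simpa using hint (-k) (by omega) (by omega)

theorem isCrossing_comp_iff {R : ℤ → ℤ} {S : ℕ → ℤ} (hS : ∀ t, |S (succ t) - S t| ≤ 1)
    {u v : ℕ} {x y : ℤ} :
    IsCrossing (R ∘ S) u v x y ↔ IsCrossing S u v (S u) (S v) ∧ IsCrossing R (S u) (S v) x y := by
  refine ⟨fun ⟨hxy, hx, hy, hint⟩ => ?_, fun h => h.2.comp h.1⟩
  simp only [Function.comp_apply] at hx hy hint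
  have hSuv : S u ≠ S v := fun h => hxy (by rw [← hx, ← hy, h])
  have hne : ∀ t, min u v < t → t < max u v → S t ≠ S u ∧ S t ≠ S v := fun t h1 h2 => by
    have := hint t h1 h2
    constructor <;> intro h <;> rw [h] at this <;> omega
  refine ⟨⟨hSuv, rfl, rfl, fun t h1 h2 => ?_⟩, ⟨hxy, hx, hy, fun k h1 h2 => ?_⟩⟩
  -- Otherwise `S` would revisit `S u` or `S v` strictly inside the crossing.
  · have hu : S u ∉ uIcc (S t) (S v) := fun h => by
      obtain ⟨r, hr, hSr⟩ := exists_eq_of_mem_uIcc hS h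
      have hrv : r ≠ v := by rintro rfl; exact hSuv hSr.symm
      rw [mem_uIcc] at hr
      exact (hne r (by omega) (by omega)).1 hSr
    have hv : S v ∉ uIcc (S u) (S t) := fun h => by
      obtain ⟨r, hr, hSr⟩ := exists_eq_of_mem_uIcc hS h
      have hru : r ≠ u := by rintro rfl; exact hSuv hSr
      rw [mem_uIcc] at hr
      exact (hne r (by omega) (by omega)).2 hSr
    simp only [mem_uIcc] at hu hv
    omega
  · obtain ⟨t, ht, rfl⟩ := exists_eq_of_mem_uIcc hS (p := u) (q := v) (c := k)
      (by rw [mem_uIcc]; omega)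
    have htu : t ≠ u := by rintro rfl; omega
    have htv : t ≠ v := by rintro rfl; omega
    rw [mem_uIcc] at ht
    exact hint t (by omega) (by omega)

theorem IsFirstCrossingDuringN.neg_iff {T : ℕ → ℤ} {t1 t4 s1 s2 : ℕ} {x y : ℤ} :
    IsFirstCrossingDuringN (fun t => -T t) t1 t4 s1 s2 (-x) (-y) ↔
      IsFirstCrossingDuringN T t1 t4 s1 s2 x y := by
  simp only [IsFirstCrossingDuringN, isCrossing_neg_iff]

theorem IsFirstCrossingDuringZ.comp_neg {T : ℤ → ℤ} {k1 k2 k3 k4 x y : ℤ}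
    (h : IsFirstCrossingDuringZ T k1 k4 k2 k3 x y) :
    IsFirstCrossingDuringZ (fun k => T (-k)) (-k1) (-k4) (-k2) (-k3) x y := by
  obtain ⟨hc, h1, h2, hmin⟩ := h
  refine ⟨isCrossing_comp_neg_iff.2 (by simpa using hc), by omega, by omega,
    fun u1 u2 hu hu1 hu2 => ?_⟩
  have := hmin (-u1) (-u2) (isCrossing_comp_neg_iff.1 hu) (by omega) (by omega)
  omega

theorem isFirstCrossingDuringN_iff_of_imp_of_exists_earlier {T T' : ℕ → ℤ} {t1 t4 s1 s2 : ℕ}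
    {x y x' y' : ℤ}
    (hsub : ∀ u1 u2, IsCrossing T' u1 u2 x' y' → IsCrossing T u1 u2 x y)
    (hearlier : ∀ u1 u2, IsCrossing T u1 u2 x y → min t1 t4 ≤ min u1 u2 →
      max u1 u2 ≤ max t1 t4 → ¬ IsCrossing T' u1 u2 x' y' →
      ∃ w1 w2, IsCrossing T' w1 w2 x' y' ∧ min t1 t4 ≤ min w1 w2 ∧ max w1 w2 ≤ max t1 t4 ∧
        Nat.dist w1 t1 < Nat.dist u1 t1) :
    IsFirstCrossingDuringN T t1 t4 s1 s2 x y ↔ IsFirstCrossingDuringN T' t1 t4 s1 s2 x' y' := by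
  constructor
  · rintro ⟨hs, hs1, hs2, hmin⟩
    refine ⟨by_contra fun hs' => ?_, hs1, hs2, fun u1 u2 hu => hmin u1 u2 (hsub u1 u2 hu)⟩
    obtain ⟨w1, w2, hw, hw1, hw2, hlt⟩ := hearlier s1 s2 hs hs1 hs2 hs'
    exact (hmin w1 w2 (hsub w1 w2 hw) hw1 hw2).not_gt hlt
  · rintro ⟨hs, hs1, hs2, hmin⟩
    refine ⟨hsub s1 s2 hs, hs1, hs2, fun u1 u2 hu hu1 hu2 => ?_⟩
    by_cases hu' : IsCrossing T' u1 u2 x' y'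
    · exact hmin u1 u2 hu' hu1 hu2
    · obtain ⟨w1, w2, hw, hw1, hw2, hlt⟩ := hearlier u1 u2 hu hu1 hu2 hu'
      exact (hmin w1 w2 hw hw1 hw2).trans hlt.le

namespace IsFirstCrossingDuringZ

variable {R : ℤ → ℤ} {k1 k2 k3 k4 x1 x2 x3 : ℤ}

theorem apply_ne_of_lt (hR : ∀ k, |R (succ k) - R k| ≤ 1) (hk1 : R k1 = x1) (hx12 : x1 < x2)
    (hx23 : x2 < x3) (hk14 : k1 ≤ k4) (hk : IsFirstCrossingDuringZ R k1 k4 k2 k3 x2 x3)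
    {m : ℤ} (hm1 : k1 ≤ m) (hm2 : m < k2) : R m ≠ x3 := by
  intro hm
  obtain ⟨-, hk_lo, hk_hi, hk_first⟩ := hk
  obtain ⟨w1, w2, hw, hw1, hw12, hw2⟩ := exists_isCrossing_of_lt hR hm1 (hk1 ▸ hx12) hx23 hm.ge
  have := hk_first w1 w2 hw (by omega) (by omega)
  omega

theorem lt_and_lt (hR : ∀ k, |R (succ k) - R k| ≤ 1) (hk1 : R k1 = x1) (hx12 : x1 < x2)
    (hx23 : x2 < x3) (hk14 : k1 ≤ k4) (hk : IsFirstCrossingDuringZ R k1 k4 k2 k3 x2 x3) :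
    k1 < k2 ∧ k2 < k3 := by
  have ⟨⟨_, hk2, hk3, _⟩, hk_lo, _⟩ := hk
  have hk12 : k1 < k2 := lt_of_le_of_ne (by omega) (by rintro rfl; omega)
  refine ⟨hk12, lt_of_not_ge fun h => ?_⟩
  rcases h.eq_or_lt with rfl | h
  · omega
  · exact hk.apply_ne_of_lt hR hk1 hx12 hx23 hk14 (by omega) h hk3

theorem eq_or_lt_of_isCrossing (hR : ∀ k, |R (succ k) - R k| ≤ 1) (hk1 : R k1 = x1)
    (hx12 : x1 < x2) (hx23 : x2 < x3) (hk14 : k1 ≤ k4)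
    (hk : IsFirstCrossingDuringZ R k1 k4 k2 k3 x2 x3) {m1 m2 : ℤ}
    (hm : IsCrossing R m1 m2 x2 x3) (hm_lo : k1 ≤ min m1 m2) (hm_hi : max m1 m2 ≤ k4) :
    m1 = k2 ∧ m2 = k3 ∨ k3 < m1 := by
  obtain ⟨hk12, hk23⟩ := hk.lt_and_lt hR hk1 hx12 hx23 hk14
  have hk2m1 : k2 ≤ m1 := by
    have := hk.2.2.2 m1 m2 hm (by omega) (by omega)
    omega
  have ⟨_, hk2, hk3, hk_int⟩ := hk.1
  obtain ⟨-, hm1, hm2, hm_int⟩ := hm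
  have hm1k3 : m1 ≠ k3 := by rintro rfl; omega
  have hm1_out : ¬ (k2 < m1 ∧ m1 < k3) := fun h => by
    have := hk_int m1 (by omega) (by omega)
    omega
  obtain rfl | h := (show m1 = k2 ∨ k3 < m1 by omega)
  · left
    refine ⟨rfl, ?_⟩
    have hm2_lo : ¬ m2 < m1 := fun h => hk.apply_ne_of_lt hR hk1 hx12 hx23 hk14 (by omega) h hm2
    have hm2m1 : m2 ≠ m1 := by rintro rfl; omega
    have hm2_mid : ¬ (m1 < m2 ∧ m2 < k3) := fun h => by
      have := hk_int m2 (by omega) (by omega)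
      omega
    have hm2_hi : ¬ k3 < m2 := fun h => by
      have := hm_int k3 (by omega) (by omega)
      omega
    omega
  · exact Or.inr h

end IsFirstCrossingDuringZ

theorem isFirstCrossingDuringN_comp_iff_of_lt {R : ℤ → ℤ} {S : ℕ → ℤ}
    (hR : ∀ k, |R (succ k) - R k| ≤ 1) (hS : ∀ t, |S (succ t) - S t| ≤ 1)
    {t1 t4 s1 s2 : ℕ} {x1 x2 x3 x4 k2 k3 : ℤ} (hx12 : x1 < x2) (hx23 : x2 < x3)
    (hcross : IsCrossing (R ∘ S) t1 t4 x1 x4) (ht14 : t1 ≤ t4) (hS14 : S t1 < S t4)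
    (hk : IsFirstCrossingDuringZ R (S t1) (S t4) k2 k3 x2 x3) :
    IsFirstCrossingDuringN (R ∘ S) t1 t4 s1 s2 x2 x3 ↔
      IsFirstCrossingDuringN S t1 t4 s1 s2 k2 k3 := by
  have hS_range := ((isCrossing_comp_iff hS).1 hcross).1.apply_mem_uIcc
  obtain ⟨hk12, hk23⟩ := hk.lt_and_lt hR hcross.2.1 hx12 hx23 hS14.le
  refine isFirstCrossingDuringN_iff_of_imp_of_exists_earlier (fun _ _ => hk.1.comp)
    fun u1 u2 hu hu_lo hu_hi hu' => ?_
  obtain ⟨hSu, hRu⟩ := (isCrossing_comp_iff hS).1 hu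
  have hSu1 := hS_range (show u1 ∈ uIcc t1 t4 by rw [mem_uIcc]; omega)
  have hSu2 := hS_range (show u2 ∈ uIcc t1 t4 by rw [mem_uIcc]; omega)
  rw [uIcc_of_lt hS14, mem_Icc] at hSu1 hSu2
  have hk3 : k3 < S u1 := by
    refine (hk.eq_or_lt_of_isCrossing hR hcross.2.1 hx12 hx23 hS14.le hRu (by omega)
      (by omega)).resolve_left ?_
    rintro ⟨h1, h2⟩
    exact hu' (h1 ▸ h2 ▸ hSu)
  obtain ⟨w1, w2, hw, hw1, hw12, hw2⟩ :=
    exists_isCrossing_of_lt hS (show t1 ≤ u1 by omega) hk12 hk23 hk3.le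
  exact ⟨w1, w2, hw, by omega, by omega, by simp only [Nat.dist]; omega⟩

theorem isFirstCrossingDuringN_comp_iff {R : ℤ → ℤ} {S : ℕ → ℤ}
    (hR : ∀ k, |R (succ k) - R k| ≤ 1) (hS : ∀ t, |S (succ t) - S t| ≤ 1)
    {t1 t4 s1 s2 : ℕ} {x1 x2 x3 x4 k2 k3 : ℤ} (hx12 : x1 < x2) (hx23 : x2 < x3)
    (hcross : IsCrossing (R ∘ S) t1 t4 x1 x4) (ht14 : t1 ≤ t4)
    (hk : IsFirstCrossingDuringZ R (S t1) (S t4) k2 k3 x2 x3) :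
    IsFirstCrossingDuringN (R ∘ S) t1 t4 s1 s2 x2 x3 ↔
      IsFirstCrossingDuringN S t1 t4 s1 s2 k2 k3 := by
  have hS14 : S t1 ≠ S t4 := fun h => hcross.1 <| by
    rw [← hcross.2.1, ← hcross.2.2.1, Function.comp_apply, h, Function.comp_apply]
  rcases hS14.lt_or_gt with hlt | hgt
  · exact isFirstCrossingDuringN_comp_iff_of_lt hR hS hx12 hx23 hcross ht14 hlt hk
  -- Reflecting the domain of `R` and the values of `S` leaves `R ∘ S` unchanged.
  have hR' : ∀ k, |R (-succ k) - R (-k)| ≤ 1 := fun k => by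
    simpa [abs_sub_comm, succ_eq_add_one] using hR (-(k + 1))
  have hS' : ∀ t, |-S (succ t) - -S t| ≤ 1 := fun t => by
    rw [neg_sub_neg, abs_sub_comm]
    exact hS t
  have hcomp : (fun k => R (-k)) ∘ (fun t => -S t) = R ∘ S := funext fun t => by simp
  have hcross' : IsCrossing ((fun k => R (-k)) ∘ (fun t => -S t)) t1 t4 x1 x4 := by
    rwa [hcomp]
  have := isFirstCrossingDuringN_comp_iff_of_lt (s1 := s1) (s2 := s2) hR' hS' hx12 hx23
    hcross' ht14 (neg_lt_neg hgt) hk.comp_neg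
  rwa [hcomp, IsFirstCrossingDuringN.neg_iff] at this

theorem first_crossing_comp_iff_general
    (R : ℤ → ℤ) (S : ℕ → ℤ)
    (hR : ∀ k : ℤ, |R (k + 1) - R k| = 1)
    (hS : ∀ t : ℕ, |S (t + 1) - S t| = 1)
    (t1 t2 t3 t4 : ℕ) (x1 x2 x3 x4 : ℤ)
    (ht12 : t1 < t2) (ht23 : t2 < t3) (ht34 : t3 < t4)
    (hx12 : x1 < x2) (hx23 : x2 < x3)
    (hcross : IsCrossing (fun t => R (S t)) t1 t4 x1 x4)
    (k2 k3 : ℤ)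
    (hk : IsFirstCrossingDuringZ R (S t1) (S t4) k2 k3 x2 x3) :
    IsFirstCrossingDuringN (fun t => R (S t)) t1 t4 t2 t3 x2 x3 ↔
      IsFirstCrossingDuringN S t1 t4 t2 t3 k2 k3 :=
  isFirstCrossingDuringN_comp_iff (fun k => (hR k).le) (fun t => (hS t).le) hx12 hx23 hcross
    (by omega) hk

/-- Lemma 7: first crossings by `R ∘ S` correspond to first crossings by `S` of first
crossings by `R`. -/
theorem first_crossing_comp_iff
    (R : ℤ → ℤ) (S : ℕ → ℤ)
    (hR : ∀ k : ℤ, |R (k + 1) - R k| = 1)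
    (hS : ∀ t : ℕ, |S (t + 1) - S t| = 1)
    (t1 t2 t3 t4 : ℕ) (x1 x2 x3 x4 : ℤ)
    (ht1 : 0 < t1) (ht12 : t1 < t2) (ht23 : t2 < t3) (ht34 : t3 < t4)
    (hx1 : 0 < x1) (hx12 : x1 < x2) (hx23 : x2 < x3) (hx34 : x3 < x4)
    (hcross : IsCrossing (fun t => R (S t)) t1 t4 x1 x4)
    (k2 k3 : ℤ)
    (hk : IsFirstCrossingDuringZ R (S t1) (S t4) k2 k3 x2 x3) :
    IsFirstCrossingDuringN (fun t => R (S t)) t1 t4 t2 t3 x2 x3 ↔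
      IsFirstCrossingDuringN S t1 t4 t2 t3 k2 k3 :=
  first_crossing_comp_iff_general R S hR hS t1 t2 t3 t4 x1 x2 x3 x4 ht12 ht23 ht34 hx12 hx23 hcross
    k2 k3 hk
end

section
/- Let 0 ≤ j1 < j2 be integers, d := j2 − j1, and let (s1, s2) (with s1 < s2) be the first crossing by S of (j1, j2), which is almost surely defined. Then the law of the increment sequence (S(s1+1) − S(s1), S(s1+2) − S(s1+1), ..., S(s2) − S(s2−1)), as a random element of the set of finite sequences with values in {−1,+1}, equals the conditional law of (S(1) − S(0), ..., S(κ_d) − S(κ_d − 1)) given the event E_{cross d} := {κ_d < κ_0}. -/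
open MeasureTheory ProbabilityTheory

/-- `(t1, t2)` is the `(j+1)`-th crossing (in order of occurrence, among crossings with
times `≥ a`) by `T` of `(x1, x2)`. -/
def IsNthCrossingAfter {α : Type*} [LinearOrder α] (T : α → ℤ) (a : α) (x1 x2 : ℤ) :
    ℕ → α → α → Prop
  | 0, t1, t2 =>
      IsCrossing T t1 t2 x1 x2 ∧ a ≤ min t1 t2 ∧
        ∀ u1 u2, IsCrossing T u1 u2 x1 x2 → a ≤ min u1 u2 → min t1 t2 ≤ min u1 u2
  | j + 1, t1, t2 =>
      ∃ s1 s2, IsNthCrossingAfter T a x1 x2 j s1 s2 ∧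
        IsCrossing T t1 t2 x1 x2 ∧ max s1 s2 ≤ min t1 t2 ∧
        ∀ u1 u2, IsCrossing T u1 u2 x1 x2 → max s1 s2 ≤ min u1 u2 → min t1 t2 ≤ min u1 u2

/-- First passage time of the path `S` at the point `x` (time `≥ 0`). -/
noncomputable def firstHit (S : ℕ → ℤ) (x : ℤ) : ℕ := sInf {t : ℕ | S t = x}

/-- First return time of the path `S` to `0` (time `> 0`). -/
noncomputable def firstReturn (S : ℕ → ℤ) : ℕ := sInf {t : ℕ | 0 < t ∧ S t = 0}

/-!
Cut the walk at its first crossing `(s₁, s₂)` of `(j₁, j₂)`: up to `s₁` it follows a word `u`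
ending at `j₁` without reaching `j₂`, and on `[s₁, s₂]` a word `L` climbing from `j₁` to `j₂`
strictly inside `(j₁, j₂)`. The pair `(u, L)` is determined by the path, and every path starting
with `u ++ L` has its first crossing there. Hence the increments on `[s₁, s₂]` equal `L` with
probability `γ 2^{-|L|}`, where `γ = ∑ᵤ 2^{-|u|}`, and summing over `L` gives `γ α = 1` with
`α = ∑_L 2^{-|L|}`. In the same way, on `{κ_d < κ_0}` the walk starts with `L ++ v`, where `v`
leads from `d` back to `0` staying positive, so `P(κ_d < κ_0, first increments = L) = 2^{-|L|} β`
and `P(κ_d < κ_0) = α β`. The factor `β` cancels in the conditional probability, which is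
therefore `2^{-|L|} / α = γ 2^{-|L|}`; no recurrence of the walk is needed.
-/

open scoped ENNReal

def incrWord (T : ℕ → ℤ) (a n : ℕ) : List ℤ :=
  (List.range n).map fun j => T (a + j + 1) - T (a + j)

def IsSignWord (w : List ℤ) : Prop := ∀ x ∈ w, x = 1 ∨ x = -1

def IsUnitStep (T : ℕ → ℤ) : Prop := ∀ k, T (k + 1) - T k = 1 ∨ T (k + 1) - T k = -1

section IncrWord

variable {T : ℕ → ℤ} {a : ℕ}

@[simp] lemma length_incrWord (T : ℕ → ℤ) (a n : ℕ) : (incrWord T a n).length = n := by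
  simp [incrWord]

lemma incrWord_add (T : ℕ → ℤ) (a m n : ℕ) :
    incrWord T a (m + n) = incrWord T a m ++ incrWord T (a + m) n := by
  simp only [incrWord, List.range_add, List.map_append, List.map_map]
  congr 2
  funext j
  simp only [Function.comp_apply, add_assoc]

lemma sum_incrWord (T : ℕ → ℤ) (a n : ℕ) : (incrWord T a n).sum = T (a + n) - T a := by
  induction n with
  | zero => simp [incrWord]
  | succ n ih =>
    rw [incrWord_add, List.sum_append, ih]
    simp [incrWord, add_assoc]

lemma take_incrWord {k n : ℕ} (hk : k ≤ n) : (incrWord T a n).take k = incrWord T a k := by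
  obtain ⟨m, rfl⟩ := Nat.exists_eq_add_of_le hk
  rw [incrWord_add, List.take_left' (length_incrWord T a k)]

lemma sum_take_incrWord {k n : ℕ} (hk : k ≤ n) :
    ((incrWord T a n).take k).sum = T (a + k) - T a := by
  rw [take_incrWord hk, sum_incrWord]

lemma incrWord_eq_iff {w : List ℤ} :
    incrWord T a w.length = w ↔ ∀ k ≤ w.length, T (a + k) - T a = (w.take k).sum := by
  constructor
  · intro h k hk
    have := sum_take_incrWord (T := T) (a := a) hk
    rwa [h, eq_comm] at this
  · intro h
    refine List.ext_getElem (length_incrWord T a _) fun j hj _ => ?_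
    have hj' : j < w.length := by simpa using hj
    have h₁ := h (j + 1) hj'
    have h₂ := h j hj'.le
    rw [List.sum_take_succ _ _ hj', ← add_assoc] at h₁
    simp only [incrWord, List.getElem_map, List.getElem_range]
    linarith

lemma incrWord_append_eq_iff {u v : List ℤ} :
    incrWord T a (u ++ v).length = u ++ v ↔
      incrWord T a u.length = u ∧ incrWord T (a + u.length) v.length = v := by
  rw [List.length_append, incrWord_add]
  exact ⟨fun h => List.append_inj h (length_incrWord T a _), fun ⟨h₁, h₂⟩ => by rw [h₁, h₂]⟩

lemma eq_of_incrWord_eq {w w' : List ℤ} (h : incrWord T a w.length = w)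
    (h' : incrWord T a w'.length = w') (hl : w.length = w'.length) : w = w' := by
  rw [← h, ← h', hl]

lemma IsSignWord.append {u v : List ℤ} (hu : IsSignWord u) (hv : IsSignWord v) :
    IsSignWord (u ++ v) :=
  fun x hx => (List.mem_append.1 hx).elim (hu x) (hv x)

lemma IsUnitStep.isSignWord_incrWord (hT : IsUnitStep T) (a n : ℕ) :
    IsSignWord (incrWord T a n) := by
  simp only [IsSignWord, incrWord, List.mem_map, List.mem_range]
  rintro _ ⟨j, -, rfl⟩
  exact hT (a + j)

lemma IsUnitStep.succ_le (hT : IsUnitStep T) (k : ℕ) : T (k + 1) ≤ T k + 1 := by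
  have := hT k
  omega

end IncrWord

lemma exists_eq_of_le_of_le_of_succ_le {T : ℕ → ℤ} (hT : ∀ k, T (k + 1) ≤ T k + 1) {a b : ℕ}
    (hab : a ≤ b) {c : ℤ} (ha : T a ≤ c) (hb : c ≤ T b) : ∃ t, a ≤ t ∧ t ≤ b ∧ T t = c := by
  induction b, hab using Nat.le_induction with
  | base => exact ⟨a, le_rfl, le_rfl, le_antisymm ha hb⟩
  | succ b hab ih =>
    by_cases h : c ≤ T b
    · obtain ⟨t, h₁, h₂, h₃⟩ := ih h
      exact ⟨t, h₁, h₂.trans b.le_succ, h₃⟩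
    · exact ⟨b + 1, hab.trans b.le_succ, le_rfl, by have := hT b; omega⟩

lemma IsUnitStep.exists_eq {T : ℕ → ℤ} (hT : IsUnitStep T) {a b : ℕ} {c : ℤ} (ha : T a ≤ c)
    (hb : c ≤ T b) : ∃ t, min a b ≤ t ∧ t ≤ max a b ∧ T t = c := by
  rcases le_total a b with hab | hba
  · obtain ⟨t, h₁, h₂, h₃⟩ := exists_eq_of_le_of_le_of_succ_le hT.succ_le hab ha hb
    exact ⟨t, by omega, by omega, h₃⟩
  · obtain ⟨t, h₁, h₂, h₃⟩ := exists_eq_of_le_of_le_of_succ_le (T := fun k => -T k)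
      (fun k => by have := hT k; omega) hba (neg_le_neg hb) (neg_le_neg ha)
    exact ⟨t, by omega, by omega, neg_inj.1 h₃⟩

def preCrossingWords (j₁ j₂ : ℤ) : Set (List ℤ) :=
  {u | IsSignWord u ∧ u.sum = j₁ ∧ ∀ k ≤ u.length, (u.take k).sum < j₂}

def crossingWords (d : ℤ) : Set (List ℤ) :=
  {w | IsSignWord w ∧ w.sum = d ∧
    ∀ k, 0 < k → k < w.length → 0 < (w.take k).sum ∧ (w.take k).sum < d}

def returnWords (d : ℤ) : Set (List ℤ) :=
  {v | IsSignWord v ∧ v.sum = -d ∧ ∀ k < v.length, -d < (v.take k).sum}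

def UniqueFactorization (W₁ W₂ : Set (List ℤ)) : Prop :=
  ∀ T : ℕ → ℤ, T 0 = 0 → ∀ u ∈ W₁, ∀ v ∈ W₂, ∀ u' ∈ W₁, ∀ v' ∈ W₂,
    incrWord T 0 (u ++ v).length = u ++ v → incrWord T 0 (u' ++ v').length = u' ++ v' →
      u = u' ∧ v = v'

section Crossing

variable {T : ℕ → ℤ} {j₁ j₂ : ℤ}

def IsFirstUpcrossing (T : ℕ → ℤ) (j₁ j₂ : ℤ) (s₁ s₂ : ℕ) : Prop :=
  s₁ < s₂ ∧ T s₁ = j₁ ∧ T s₂ = j₂ ∧ (∀ t < s₂, T t < j₂) ∧ ∀ t, s₁ < t → t < s₂ → j₁ < T t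

lemma exists_isCrossing (hT : ∀ k, T (k + 1) ≤ T k + 1) (h0 : T 0 ≤ j₁) (hj : j₁ < j₂) {t : ℕ}
    (ht : j₂ ≤ T t) : ∃ τ₁ τ₂, τ₁ < τ₂ ∧ τ₂ ≤ t ∧ IsCrossing T τ₁ τ₂ j₁ j₂ := by
  have hex : ∃ t, j₂ ≤ T t := ⟨t, ht⟩
  set τ₂ := Nat.find hex
  have hspec : j₂ ≤ T τ₂ := Nat.find_spec hex
  have hbelow : ∀ s < τ₂, T s < j₂ := fun s hs => not_le.1 (Nat.find_min hex hs)
  obtain ⟨m, hm⟩ : ∃ m, τ₂ = m + 1 :=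
    Nat.exists_eq_succ_of_ne_zero fun h => by rw [h] at hspec; omega
  have hτ₂ : T τ₂ = j₂ := by
    have := hbelow m (by omega)
    have := hT m
    rw [hm] at hspec ⊢
    omega
  set τ₁ := Nat.findGreatest (fun s => T s ≤ j₁) τ₂
  have hτ₁le : T τ₁ ≤ j₁ := Nat.findGreatest_spec (P := fun s => T s ≤ j₁) (Nat.zero_le _) h0
  have habove : ∀ s, τ₁ < s → s ≤ τ₂ → j₁ < T s := fun s h₁ h₂ =>
    not_le.1 (Nat.findGreatest_is_greatest h₁ h₂)
  have hτ₁τ₂ : τ₁ < τ₂ :=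
    lt_of_le_of_ne (Nat.findGreatest_le _) fun h => by rw [h, hτ₂] at hτ₁le; omega
  have hτ₁ : T τ₁ = j₁ := by
    have := habove (τ₁ + 1) (by omega) hτ₁τ₂
    have := hT τ₁
    omega
  refine ⟨τ₁, τ₂, hτ₁τ₂, Nat.find_min' hex ht, hj.ne, hτ₁, hτ₂, fun s h₁ h₂ => ?_⟩
  rw [min_eq_left hτ₁τ₂.le] at h₁
  rw [max_eq_right hτ₁τ₂.le] at h₂
  rw [min_eq_left hj.le, max_eq_right hj.le]
  exact ⟨habove s h₁ h₂.le, hbelow s h₂⟩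

lemma IsNthCrossingAfter.isFirstUpcrossing (hT : ∀ k, T (k + 1) ≤ T k + 1) (h0 : T 0 ≤ j₁)
    (hj : j₁ < j₂) {s₁ s₂ : ℕ} (hs : s₁ < s₂) (h : IsNthCrossingAfter T 0 j₁ j₂ 0 s₁ s₂) :
    IsFirstUpcrossing T j₁ j₂ s₁ s₂ := by
  obtain ⟨⟨-, h₁, h₂, hbetween⟩, -, hmin⟩ := h
  simp only [min_eq_left hs.le, max_eq_right hs.le, min_eq_left hj.le, max_eq_right hj.le]
    at hbetween hmin
  refine ⟨hs, h₁, h₂, fun t ht => ?_, fun t h₁ h₂ => (hbetween t h₁ h₂).1⟩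
  rcases le_or_gt t s₁ with hts | hts
  · by_contra hge
    obtain ⟨τ₁, τ₂, hτ, hτt, hc⟩ := exists_isCrossing hT h0 hj (not_lt.1 hge)
    have := hmin τ₁ τ₂ hc (Nat.zero_le _)
    rw [min_eq_left hτ.le] at this
    omega
  · exact (hbetween t hts ht).2

lemma IsFirstUpcrossing.unique {s₁ s₂ s₁' s₂' : ℕ} (h : IsFirstUpcrossing T j₁ j₂ s₁ s₂)
    (h' : IsFirstUpcrossing T j₁ j₂ s₁' s₂') : s₁ = s₁' ∧ s₂ = s₂' := by
  obtain ⟨hs, h₁, h₂, hbelow, habove⟩ := h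
  obtain ⟨hs', h₁', h₂', hbelow', habove'⟩ := h'
  have e₂ : s₂ = s₂' := by
    rcases lt_trichotomy s₂ s₂' with hlt | heq | hlt
    · exact absurd h₂ (hbelow' _ hlt).ne
    · exact heq
    · exact absurd h₂' (hbelow _ hlt).ne
  subst e₂
  refine ⟨?_, rfl⟩
  rcases lt_trichotomy s₁ s₁' with hlt | heq | hlt
  · exact absurd h₁' (habove _ hlt hs').ne'
  · exact heq
  · exact absurd h₁ (habove' _ hlt hs).ne'

lemma isFirstUpcrossing_of_incrWord_eq {u L : List ℤ} (h0 : T 0 = 0) (hj : j₁ < j₂)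
    (hu : u ∈ preCrossingWords j₁ j₂) (hL : L ∈ crossingWords (j₂ - j₁))
    (hT : incrWord T 0 (u ++ L).length = u ++ L) :
    IsFirstUpcrossing T j₁ j₂ u.length (u.length + L.length) := by
  obtain ⟨-, hu_sum, hu_lt⟩ := hu
  obtain ⟨-, hL_sum, hL_btw⟩ := hL
  rw [incrWord_append_eq_iff, incrWord_eq_iff, incrWord_eq_iff] at hT
  obtain ⟨hTu, hTL⟩ := hT
  simp only [zero_add, h0, sub_zero] at hTu hTL
  have hTu_end : T u.length = j₁ := by rw [hTu _ le_rfl, List.take_length, hu_sum]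
  have hLpos : 0 < L.length := List.length_pos_iff.2 (by rintro rfl; simp at hL_sum; omega)
  refine ⟨by omega, hTu_end, ?_, fun t ht => ?_, fun t h₁ h₂ => ?_⟩
  · have := hTL _ le_rfl
    rw [List.take_length, hL_sum] at this
    omega
  · rcases le_or_gt t u.length with htu | htu
    · rw [hTu t htu]
      exact hu_lt t htu
    · obtain ⟨m, rfl⟩ := Nat.exists_eq_add_of_le htu.le
      have := hTL m (by omega)
      have := (hL_btw m (by omega) (by omega)).2
      omega
  · obtain ⟨m, rfl⟩ := Nat.exists_eq_add_of_le h₁.le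
    have := hTL m (by omega)
    have := (hL_btw m (by omega) (by omega)).1
    omega

lemma IsFirstUpcrossing.incrWord_mem {s₁ s₂ : ℕ} (hT : IsUnitStep T) (h0 : T 0 = 0)
    (h : IsFirstUpcrossing T j₁ j₂ s₁ s₂) :
    incrWord T 0 s₁ ∈ preCrossingWords j₁ j₂ ∧
      incrWord T s₁ (s₂ - s₁) ∈ crossingWords (j₂ - j₁) := by
  obtain ⟨hs, h₁, h₂, hbelow, habove⟩ := h
  refine ⟨⟨hT.isSignWord_incrWord _ _, ?_, fun k hk => ?_⟩,
    ⟨hT.isSignWord_incrWord _ _, ?_, fun k hk₀ hk => ?_⟩⟩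
  · rw [sum_incrWord, zero_add, h₁, h0, sub_zero]
  · rw [length_incrWord] at hk
    rw [sum_take_incrWord hk, zero_add, h0, sub_zero]
    exact hbelow k (by omega)
  · rw [sum_incrWord, Nat.add_sub_cancel' hs.le, h₁, h₂]
  · rw [length_incrWord] at hk
    rw [sum_take_incrWord hk.le, h₁]
    have := habove (s₁ + k) (by omega) (by omega)
    have := hbelow (s₁ + k) (by omega)
    constructor <;> omega

lemma IsFirstUpcrossing.incrWord_mem_iff {s₁ s₂ : ℕ} (hT : IsUnitStep T) (h0 : T 0 = 0)
    (hj : j₁ < j₂) (h : IsFirstUpcrossing T j₁ j₂ s₁ s₂) (B : Set (List ℤ)) :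
    incrWord T s₁ (s₂ - s₁) ∈ B ↔ ∃ u ∈ preCrossingWords j₁ j₂,
      ∃ L ∈ crossingWords (j₂ - j₁) ∩ B, incrWord T 0 (u ++ L).length = u ++ L := by
  constructor
  · intro hB
    obtain ⟨hu, hL⟩ := h.incrWord_mem hT h0
    exact ⟨_, hu, _, ⟨hL, hB⟩, by rw [incrWord_append_eq_iff]; simp⟩
  · rintro ⟨u, hu, L, ⟨hL, hB⟩, hfol⟩
    obtain ⟨rfl, rfl⟩ := h.unique (isFirstUpcrossing_of_incrWord_eq h0 hj hu hL hfol)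
    have hL' : incrWord T u.length L.length = L := by
      simpa using (incrWord_append_eq_iff.1 hfol).2
    simpa [hL'] using hB

lemma uniqueFactorization_preCrossingWords_crossingWords (hj : j₁ < j₂) :
    UniqueFactorization (preCrossingWords j₁ j₂) (crossingWords (j₂ - j₁)) := by
  intro T h0 u hu L hL u' hu' L' hL' hT hT'
  obtain ⟨e₁, e₂⟩ := (isFirstUpcrossing_of_incrWord_eq h0 hj hu hL hT).unique
    (isFirstUpcrossing_of_incrWord_eq h0 hj hu' hL' hT')
  exact List.append_inj (eq_of_incrWord_eq hT hT' (by simp only [List.length_append]; omega)) e₁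

end Crossing

section HitReturn

variable {T : ℕ → ℤ} {d : ℤ}

def IsHitBeforeReturn (T : ℕ → ℤ) (d : ℤ) (h r : ℕ) : Prop :=
  h < r ∧ T h = d ∧ T r = 0 ∧ (∀ k < h, T k < d) ∧ ∀ k, 0 < k → k < r → 0 < T k

lemma IsHitBeforeReturn.firstHit_eq {h r : ℕ} (H : IsHitBeforeReturn T d h r) :
    firstHit T d = h :=
  IsLeast.csInf_eq ⟨H.2.1, fun _ hk => not_lt.1 fun hlt => (H.2.2.2.1 _ hlt).ne hk⟩

lemma IsHitBeforeReturn.firstReturn_eq {h r : ℕ} (H : IsHitBeforeReturn T d h r) :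
    firstReturn T = r :=
  IsLeast.csInf_eq ⟨⟨(Nat.zero_le h).trans_lt H.1, H.2.2.1⟩,
    fun _ ⟨hk₀, hk⟩ => not_lt.1 fun hlt => (H.2.2.2.2 _ hk₀ hlt).ne' hk⟩

-- `firstHit T d = 0` if `T` never hits `d`, and `firstReturn T = 0` if `T` never returns to `0`.
lemma isHitBeforeReturn_firstHit_firstReturn (hT : IsUnitStep T) (h0 : T 0 = 0) (hd : 0 < d)
    (hhit : ∃ t, T t = d) (hE : firstHit T d < firstReturn T) :
    IsHitBeforeReturn T d (firstHit T d) (firstReturn T) := by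
  have hTh : T (firstHit T d) = d := Nat.sInf_mem hhit
  have hret : {t | 0 < t ∧ T t = 0}.Nonempty := by
    by_contra hne
    rw [Set.not_nonempty_iff_eq_empty] at hne
    simp [firstReturn, hne] at hE
  obtain ⟨hr₀, hTr⟩ : 0 < firstReturn T ∧ T (firstReturn T) = 0 := Nat.sInf_mem hret
  have hh₀ : 0 < firstHit T d := Nat.pos_of_ne_zero fun h => by rw [h, h0] at hTh; omega
  refine ⟨hE, hTh, hTr, fun k hk => ?_, fun k hk₀ hk => ?_⟩
  · by_contra hge
    obtain ⟨t, -, htk, ht⟩ := hT.exists_eq (a := 0) (b := k) (by rw [h0]; exact hd.le)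
      (not_lt.1 hge)
    exact Nat.notMem_of_lt_sInf (by omega : t < firstHit T d) ht
  · by_contra hle
    obtain ⟨t, h₁, h₂, ht⟩ := hT.exists_eq (a := k) (b := firstHit T d) (not_lt.1 hle)
      (by rw [hTh]; exact hd.le)
    exact Nat.notMem_of_lt_sInf (by omega : t < firstReturn T) ⟨by omega, ht⟩

lemma isHitBeforeReturn_of_incrWord_eq {L v : List ℤ} (h0 : T 0 = 0) (hd : 0 < d)
    (hL : L ∈ crossingWords d) (hv : v ∈ returnWords d)
    (hT : incrWord T 0 (L ++ v).length = L ++ v) :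
    IsHitBeforeReturn T d L.length (L.length + v.length) := by
  obtain ⟨-, hL_sum, hL_btw⟩ := hL
  obtain ⟨-, hv_sum, hv_gt⟩ := hv
  rw [incrWord_append_eq_iff, incrWord_eq_iff, incrWord_eq_iff] at hT
  obtain ⟨hTL, hTv⟩ := hT
  simp only [zero_add, h0, sub_zero] at hTL hTv
  have hTL_end : T L.length = d := by rw [hTL _ le_rfl, List.take_length, hL_sum]
  have hvpos : 0 < v.length := List.length_pos_iff.2 (by rintro rfl; simp at hv_sum; omega)
  refine ⟨by omega, hTL_end, ?_, fun k hk => ?_, fun k hk₀ hk => ?_⟩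
  · have := hTv _ le_rfl
    rw [List.take_length, hv_sum] at this
    omega
  · rcases Nat.eq_zero_or_pos k with rfl | hk₀
    · rwa [h0]
    · rw [hTL k hk.le]
      exact (hL_btw k hk₀ hk).2
  · rcases lt_or_ge k L.length with hkL | hkL
    · rw [hTL k hkL.le]
      exact (hL_btw k hk₀ hkL).1
    · obtain ⟨m, rfl⟩ := Nat.exists_eq_add_of_le hkL
      have := hTv m (by omega)
      have := hv_gt m (by omega)
      omega

lemma IsHitBeforeReturn.incrWord_mem {h r : ℕ} (hT : IsUnitStep T) (h0 : T 0 = 0) (hd : 0 < d)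
    (H : IsHitBeforeReturn T d h r) :
    incrWord T 0 h ∈ crossingWords d ∧ incrWord T h (r - h) ∈ returnWords d := by
  obtain ⟨hhr, hTh, hTr, hbelow, hpos⟩ := H
  have hh₀ : 0 < h := Nat.pos_of_ne_zero fun h' => by rw [h', h0] at hTh; omega
  refine ⟨⟨hT.isSignWord_incrWord _ _, ?_, fun k hk₀ hk => ?_⟩,
    ⟨hT.isSignWord_incrWord _ _, ?_, fun k hk => ?_⟩⟩
  · rw [sum_incrWord, zero_add, hTh, h0, sub_zero]
  · rw [length_incrWord] at hk
    rw [sum_take_incrWord hk.le, zero_add, h0, sub_zero]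
    exact ⟨hpos k hk₀ (by omega), hbelow k hk⟩
  · rw [sum_incrWord, Nat.add_sub_cancel' hhr.le, hTr, hTh, zero_sub]
  · rw [length_incrWord] at hk
    rw [sum_take_incrWord hk.le, hTh]
    have := hpos (h + k) (by omega) (by omega)
    omega

lemma firstHit_lt_firstReturn_and_incrWord_mem_iff (hT : IsUnitStep T) (h0 : T 0 = 0)
    (hd : 0 < d) (hhit : ∃ t, T t = d) (B : Set (List ℤ)) :
    (firstHit T d < firstReturn T ∧ incrWord T 0 (firstHit T d) ∈ B) ↔
      ∃ L ∈ crossingWords d ∩ B, ∃ v ∈ returnWords d, incrWord T 0 (L ++ v).length = L ++ v := by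
  constructor
  · rintro ⟨hE, hB⟩
    obtain ⟨hL, hv⟩ := (isHitBeforeReturn_firstHit_firstReturn hT h0 hd hhit hE).incrWord_mem
      hT h0 hd
    exact ⟨_, ⟨hL, hB⟩, _, hv, by rw [incrWord_append_eq_iff]; simp⟩
  · rintro ⟨L, ⟨hL, hB⟩, v, hv, hfol⟩
    have H := isHitBeforeReturn_of_incrWord_eq h0 hd hL hv hfol
    rw [H.firstHit_eq, H.firstReturn_eq]
    exact ⟨H.1, by rwa [(incrWord_append_eq_iff.1 hfol).1]⟩

lemma uniqueFactorization_crossingWords_returnWords (hd : 0 < d) :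
    UniqueFactorization (crossingWords d) (returnWords d) := by
  intro T h0 L hL v hv L' hL' v' hv' hT hT'
  have H := isHitBeforeReturn_of_incrWord_eq h0 hd hL hv hT
  have H' := isHitBeforeReturn_of_incrWord_eq h0 hd hL' hv' hT'
  have e₁ : L.length = L'.length := H.firstHit_eq.symm.trans H'.firstHit_eq
  have e₂ : L.length + v.length = L'.length + v'.length :=
    H.firstReturn_eq.symm.trans H'.firstReturn_eq
  exact List.append_inj (eq_of_incrWord_eq hT hT' (by simp only [List.length_append]; omega)) e₁

lemma replicate_mem_returnWords (hd : 0 ≤ d) : List.replicate d.toNat (-1) ∈ returnWords d := by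
  refine ⟨fun x hx => Or.inr (List.eq_of_mem_replicate hx), by simp [hd], fun k hk => ?_⟩
  simp only [List.length_replicate] at hk
  simp only [List.take_replicate, List.sum_replicate, Int.nsmul_eq_mul, Nat.cast_min,
    Int.ofNat_toNat, mul_neg, mul_one, neg_lt_neg_iff]
  omega

end HitReturn

lemma ProbabilityTheory.cond_apply₀ {Ω : Type*} [MeasurableSpace Ω] {μ : Measure Ω} {s : Set Ω}
    (hs : NullMeasurableSet s μ) (t : Set Ω) : μ[t | s] = (μ s)⁻¹ * μ (s ∩ t) := by
  rw [cond, Measure.smul_apply, Measure.restrict_apply₀' hs, Set.inter_comm, smul_eq_mul]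

structure IsSimpleRandomWalk {Ω : Type*} [MeasurableSpace Ω] (S : Ω → ℕ → ℤ) (P : Measure Ω) :
    Prop where
  zero : ∀ ω, S ω 0 = 0
  measurable : ∀ k, Measurable fun ω => S ω k
  iIndepFun_increment : iIndepFun (fun k ω => S ω (k + 1) - S ω k) P
  measure_increment : ∀ k, P {ω | S ω (k + 1) - S ω k = 1} = 1 / 2 ∧
    P {ω | S ω (k + 1) - S ω k = -1} = 1 / 2

def walkCylinder {Ω : Type*} (S : Ω → ℕ → ℤ) (w : List ℤ) : Set Ω :=
  {ω | incrWord (S ω) 0 w.length = w}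

noncomputable def wordWeight (W : Set (List ℤ)) : ℝ≥0∞ := ∑' w : W, 2⁻¹ ^ (w : List ℤ).length

lemma wordWeight_ne_zero {W : Set (List ℤ)} {w : List ℤ} (hw : w ∈ W) : wordWeight W ≠ 0 :=
  fun h => pow_ne_zero _ (by simp) (ENNReal.tsum_eq_zero.1 h ⟨w, hw⟩)

lemma walkCylinder_eq_biInter {Ω : Type*} (S : Ω → ℕ → ℤ) (w : List ℤ) :
    walkCylinder S w = ⋂ i ∈ Finset.range w.length,
      (fun ω => S ω (i + 1) - S ω i) ⁻¹' {w.getD i 0} := by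
  ext ω
  simp only [walkCylinder, Set.mem_iInter, Finset.mem_range, Set.mem_preimage,
    Set.mem_singleton_iff, List.ext_getElem_iff, length_incrWord, true_and]
  refine forall_congr' fun i => ⟨fun h hi => ?_, fun h hi _ => ?_⟩
  · have := h hi hi
    simp only [incrWord, List.getElem_map, List.getElem_range, zero_add] at this
    rw [List.getD_eq_getElem _ _ hi, this]
  · have := h hi
    simp only [List.getD_eq_getElem _ _ hi] at this
    simpa [incrWord] using this

namespace IsSimpleRandomWalk

variable {Ω : Type*} [MeasurableSpace Ω] {S : Ω → ℕ → ℤ} {P : Measure Ω}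
  (hS : IsSimpleRandomWalk S P)
include hS

lemma measurable_increment (k : ℕ) : Measurable fun ω => S ω (k + 1) - S ω k :=
  (hS.measurable _).sub (hS.measurable _)

lemma ae_isUnitStep [IsProbabilityMeasure P] : ∀ᵐ ω ∂P, IsUnitStep (S ω) := by
  refine ae_all_iff.2 fun k => ?_
  have hup : MeasurableSet {ω | S ω (k + 1) - S ω k = 1} :=
    hS.measurable_increment k (measurableSet_singleton 1)
  have hdown : MeasurableSet {ω | S ω (k + 1) - S ω k = -1} :=
    hS.measurable_increment k (measurableSet_singleton (-1))
  refine (ae_mem_iff_measure_eq (hup.union hdown).nullMeasurableSet).2 ?_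
  rw [measure_union (Set.disjoint_left.2 fun ω h₁ h₂ => by simp_all) hdown,
    (hS.measure_increment k).1, (hS.measure_increment k).2, ENNReal.add_halves, measure_univ]

lemma measurableSet_walkCylinder (w : List ℤ) : MeasurableSet (walkCylinder S w) := by
  rw [walkCylinder_eq_biInter]
  exact Finset.measurableSet_biInter _ fun i _ =>
    hS.measurable_increment i (measurableSet_singleton _)

lemma measure_walkCylinder {w : List ℤ} (hw : IsSignWord w) :
    P (walkCylinder S w) = 2⁻¹ ^ w.length := by
  rw [walkCylinder_eq_biInter, hS.iIndepFun_increment.measure_inter_preimage_eq_mul _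
    fun _ _ => measurableSet_singleton _]
  rw [Finset.prod_congr rfl (g := fun _ => 2⁻¹), Finset.prod_const, Finset.card_range]
  intro i hi
  have hmem : w.getD i 0 ∈ w := by
    rw [List.getD_eq_getElem _ _ (Finset.mem_range.1 hi)]
    exact List.getElem_mem _
  rcases hw _ hmem with h | h <;> rw [h]
  · rw [← one_div]; exact (hS.measure_increment i).1
  · rw [← one_div]; exact (hS.measure_increment i).2

lemma measure_biUnion_walkCylinder_append {W₁ W₂ s₁ s₂ : Set (List ℤ)}
    (hW₁ : ∀ w ∈ W₁, IsSignWord w) (hW₂ : ∀ w ∈ W₂, IsSignWord w)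
    (huf : UniqueFactorization W₁ W₂) (h₁ : s₁ ⊆ W₁) (h₂ : s₂ ⊆ W₂) :
    P (⋃ u ∈ s₁, ⋃ v ∈ s₂, walkCylinder S (u ++ v)) = wordWeight s₁ * wordWeight s₂ := by
  have hunion : (⋃ u ∈ s₁, ⋃ v ∈ s₂, walkCylinder S (u ++ v)) =
      ⋃ p : s₁ × s₂, walkCylinder S (p.1.1 ++ p.2.1) := by
    ext ω
    simp
  have hdisj :
      Pairwise (Function.onFun Disjoint fun p : s₁ × s₂ => walkCylinder S (p.1.1 ++ p.2.1)) := by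
    intro p q hpq
    refine Set.disjoint_left.2 fun ω hp hq => hpq ?_
    obtain ⟨e₁, e₂⟩ := huf (S ω) (hS.zero ω) _ (h₁ p.1.2) _ (h₂ p.2.2) _ (h₁ q.1.2) _
      (h₂ q.2.2) hp hq
    exact Prod.ext (Subtype.ext e₁) (Subtype.ext e₂)
  rw [hunion, measure_iUnion hdisj fun _ => hS.measurableSet_walkCylinder _, ENNReal.tsum_prod',
    wordWeight, wordWeight, ← ENNReal.tsum_mul_right]
  refine tsum_congr fun u => ?_
  rw [← ENNReal.tsum_mul_left]
  refine tsum_congr fun v => ?_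
  rw [hS.measure_walkCylinder ((hW₁ _ (h₁ u.2)).append (hW₂ _ (h₂ v.2))), List.length_append,
    pow_add]

section FirstUpcrossing

variable [IsProbabilityMeasure P] {j₁ j₂ : ℤ} {s₁ s₂ : Ω → ℕ} (hj : j₁ < j₂)
  (hs : ∀ᵐ ω ∂P, IsFirstUpcrossing (S ω) j₁ j₂ (s₁ ω) (s₂ ω))
include hj hs

lemma incrWord_firstUpcrossing_mem_ae_eq (B : Set (List ℤ)) :
    {ω | incrWord (S ω) (s₁ ω) (s₂ ω - s₁ ω) ∈ B} =ᵐ[P]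
      ⋃ u ∈ preCrossingWords j₁ j₂, ⋃ L ∈ crossingWords (j₂ - j₁) ∩ B, walkCylinder S (u ++ L) := by
  refine Filter.eventuallyEq_set.2 ?_
  filter_upwards [hS.ae_isUnitStep, hs] with ω hT hω
  simp only [Set.mem_iUnion, exists_prop]
  exact hω.incrWord_mem_iff hT (hS.zero ω) hj B

lemma measure_incrWord_firstUpcrossing_mem (B : Set (List ℤ)) :
    P {ω | incrWord (S ω) (s₁ ω) (s₂ ω - s₁ ω) ∈ B} =
      wordWeight (preCrossingWords j₁ j₂) * wordWeight (crossingWords (j₂ - j₁) ∩ B) := by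
  rw [measure_congr (hS.incrWord_firstUpcrossing_mem_ae_eq hj hs B),
    hS.measure_biUnion_walkCylinder_append (fun _ hu => hu.1) (fun _ hL => hL.1)
      (uniqueFactorization_preCrossingWords_crossingWords hj) subset_rfl Set.inter_subset_left]

end FirstUpcrossing

section HitBeforeReturn

variable [IsProbabilityMeasure P] {d : ℤ} (hd : 0 < d) (hhit : ∀ᵐ ω ∂P, ∃ t, S ω t = d)
include hd hhit

lemma hitBeforeReturn_ae_eq (B : Set (List ℤ)) :
    {ω | firstHit (S ω) d < firstReturn (S ω) ∧ incrWord (S ω) 0 (firstHit (S ω) d) ∈ B} =ᵐ[P]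
      ⋃ L ∈ crossingWords d ∩ B, ⋃ v ∈ returnWords d, walkCylinder S (L ++ v) := by
  refine Filter.eventuallyEq_set.2 ?_
  filter_upwards [hS.ae_isUnitStep, hhit] with ω hT hω
  simp only [Set.mem_iUnion, exists_prop]
  exact firstHit_lt_firstReturn_and_incrWord_mem_iff hT (hS.zero ω) hd hω B

lemma measure_hitBeforeReturn (B : Set (List ℤ)) :
    P {ω | firstHit (S ω) d < firstReturn (S ω) ∧ incrWord (S ω) 0 (firstHit (S ω) d) ∈ B} =
      wordWeight (crossingWords d ∩ B) * wordWeight (returnWords d) := by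
  rw [measure_congr (hS.hitBeforeReturn_ae_eq hd hhit B),
    hS.measure_biUnion_walkCylinder_append (fun _ hL => hL.1) (fun _ hv => hv.1)
      (uniqueFactorization_crossingWords_returnWords hd) Set.inter_subset_left subset_rfl]

lemma nullMeasurableSet_firstHit_lt_firstReturn :
    NullMeasurableSet {ω | firstHit (S ω) d < firstReturn (S ω)} P := by
  have h := hS.hitBeforeReturn_ae_eq hd hhit Set.univ
  simp only [Set.mem_univ, and_true, Set.inter_univ] at h
  exact (MeasurableSet.biUnion (Set.to_countable _) fun _ _ => MeasurableSet.biUnion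
    (Set.to_countable _) fun _ _ => hS.measurableSet_walkCylinder _).nullMeasurableSet.congr h.symm

end HitBeforeReturn

end IsSimpleRandomWalk

theorem first_crossing_increments_law_general
    {Ω : Type*} [MeasurableSpace Ω] (P : Measure Ω) [IsProbabilityMeasure P]
    (S : Ω → ℕ → ℤ)
    (hS0 : ∀ ω, S ω 0 = 0)
    (hSmeas : ∀ k : ℕ, Measurable fun ω => S ω k)
    (hSindep : iIndepFun (fun k ω => S ω (k + 1) - S ω k) P)
    (hSunif : ∀ k : ℕ, P {ω | S ω (k + 1) - S ω k = 1} = 1 / 2 ∧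
      P {ω | S ω (k + 1) - S ω k = -1} = 1 / 2)
    (j1 j2 : ℤ) (hj1 : 0 ≤ j1) (hj12 : j1 < j2)
    (s1 s2 : Ω → ℕ)
    (hfirst : ∀ᵐ ω ∂P, s1 ω < s2 ω ∧ IsNthCrossingAfter (S ω) 0 j1 j2 0 (s1 ω) (s2 ω)) :
    ∀ L : List ℤ,
      P {ω | ((List.range (s2 ω - s1 ω)).map fun j =>
          S ω (s1 ω + j + 1) - S ω (s1 ω + j)) = L} =
        ProbabilityTheory.cond P {ω | firstHit (S ω) (j2 - j1) < firstReturn (S ω)}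
          {ω | ((List.range (firstHit (S ω) (j2 - j1))).map fun j =>
            S ω (j + 1) - S ω j) = L} := by
  intro L
  have hS : IsSimpleRandomWalk S P := ⟨hS0, hSmeas, hSindep, hSunif⟩
  have hd : 0 < j2 - j1 := sub_pos.2 hj12
  have hcross : ∀ᵐ ω ∂P, IsFirstUpcrossing (S ω) j1 j2 (s1 ω) (s2 ω) := by
    filter_upwards [hS.ae_isUnitStep, hfirst] with ω hT ⟨hlt, hN⟩
    exact hN.isFirstUpcrossing hT.succ_le (by rw [hS0]; exact hj1) hj12 hlt
  have hhit : ∀ᵐ ω ∂P, ∃ t, S ω t = j2 - j1 := by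
    filter_upwards [hS.ae_isUnitStep, hcross] with ω hT hω
    obtain ⟨t, -, -, ht⟩ := hT.exists_eq (a := 0) (b := s2 ω) (c := j2 - j1)
      (by rw [hS0]; exact hd.le) (by rw [hω.2.2.1]; omega)
    exact ⟨t, ht⟩
  have hone := hS.measure_incrWord_firstUpcrossing_mem hj12 hcross Set.univ
  have hG := hS.measure_incrWord_firstUpcrossing_mem hj12 hcross {L}
  have hE := hS.measure_hitBeforeReturn hd hhit Set.univ
  have hEF := hS.measure_hitBeforeReturn hd hhit {L}
  simp only [Set.mem_univ, Set.ofPred_true, Set.inter_univ, measure_univ, and_true] at hone hE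
  simp only [incrWord, Set.mem_singleton_iff, zero_add, Set.ofPred_and] at hG hEF
  set α := wordWeight (crossingWords (j2 - j1))
  set β := wordWeight (returnWords (j2 - j1))
  have hα : α ≠ 0 := right_ne_zero_of_mul_eq_one hone.symm
  have hβ : β ≠ 0 := wordWeight_ne_zero (replicate_mem_returnWords hd.le)
  have hβ' : β ≠ ⊤ := fun h => measure_ne_top P _ (hE.trans (by rw [h, ENNReal.mul_top hα]))
  rw [cond_apply₀ (hS.nullMeasurableSet_firstHit_lt_firstReturn hd hhit), hG, hE, hEF,
    ← ENNReal.div_eq_inv_mul, ENNReal.mul_div_mul_right _ _ hβ hβ',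
    ENNReal.eq_inv_of_mul_eq_one_left hone.symm, div_eq_mul_inv, mul_comm]

/-- Fact e.3: the law of the increments of `S` along the first crossing of `(j1, j2)`
(with `0 ≤ j1 < j2`, `d := j2 - j1`) equals the law of the increments
`(ΔS 0, ..., ΔS (κ_d - 1))` conditioned on the event `{κ_d < κ_0}`. -/
theorem first_crossing_increments_law
    {Ω : Type*} [MeasurableSpace Ω] (P : Measure Ω) [IsProbabilityMeasure P]
    (S : Ω → ℕ → ℤ)
    (hS0 : ∀ ω, S ω 0 = 0)
    (hSmeas : ∀ k : ℕ, Measurable fun ω => S ω k)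
    (hSindep : iIndepFun (fun k ω => S ω (k + 1) - S ω k) P)
    (hSunif : ∀ k : ℕ, P {ω | S ω (k + 1) - S ω k = 1} = 1 / 2 ∧
      P {ω | S ω (k + 1) - S ω k = -1} = 1 / 2)
    (j1 j2 : ℤ) (hj1 : 0 ≤ j1) (hj12 : j1 < j2)
    (s1 s2 : Ω → ℕ) (hs1 : Measurable s1) (hs2 : Measurable s2)
    (hfirst : ∀ᵐ ω ∂P, s1 ω < s2 ω ∧ IsNthCrossingAfter (S ω) 0 j1 j2 0 (s1 ω) (s2 ω)) :
    ∀ L : List ℤ,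
      P {ω | ((List.range (s2 ω - s1 ω)).map fun j =>
          S ω (s1 ω + j + 1) - S ω (s1 ω + j)) = L} =
        ProbabilityTheory.cond P {ω | firstHit (S ω) (j2 - j1) < firstReturn (S ω)}
          {ω | ((List.range (firstHit (S ω) (j2 - j1))).map fun j =>
            S ω (j + 1) - S ω j) = L} :=
  first_crossing_increments_law_general P S hS0 hSmeas hSindep hSunif j1 j2 hj1 hj12 s1 s2 hfirst
end

section
/- Let ζa, ζb, ζc, ζd be binary words, each of length at least 2, with ζa ≼ ζb ≼ ζc ≼ ζd. If ζa is uniquely contained in ζd (ζa ≼₁ ζd), then ζb is uniquely contained in ζc (ζb ≼₁ ζc). -/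
/-- The word `v` (of length `lv`, given by its first `lv` values) occurs in the word `w`
(of length `lw`) at the ordered pair of positions `(j1, j2)`: the positions lie in
`{0, ..., lw - 1}`, `j2 = j1 ± (lv - 1)` (forwards or backwards reading), and the letters
match. -/
def WordOccursAt (lv : ℕ) (v : ℕ → Bool) (lw : ℕ) (w : ℕ → Bool) (j1 j2 : ℤ) : Prop :=
  0 ≤ j1 ∧ j1 < lw ∧ 0 ≤ j2 ∧ j2 < lw ∧ j1 ≠ j2 ∧
    (j2 - j1 = (lv : ℤ) - 1 ∨ j1 - j2 = (lv : ℤ) - 1) ∧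
    ∀ l : ℕ, l < lv → v l = w (if j1 < j2 then (j1 + l).toNat else (j1 - l).toNat)

/-- `v` is contained in `w` (written `v ≼ w`). -/
def WordContained (lv : ℕ) (v : ℕ → Bool) (lw : ℕ) (w : ℕ → Bool) : Prop :=
  ∃ j1 j2 : ℤ, WordOccursAt lv v lw w j1 j2

/-- `v` is uniquely contained in `w` (written `v ≼₁ w`): exactly one ordered pair of
positions witnesses the containment. -/
def WordUniquelyContained (lv : ℕ) (v : ℕ → Bool) (lw : ℕ) (w : ℕ → Bool) : Prop :=
  ∃! p : ℤ × ℤ, WordOccursAt lv v lw w p.1 p.2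

/-- Normalized occurrence: start position `j1` and direction `ε`. -/
def Occ (lv : ℕ) (v : ℕ → Bool) (lw : ℕ) (w : ℕ → Bool) (j1 ε : ℤ) : Prop :=
  0 ≤ j1 ∧ j1 < lw ∧ 0 ≤ j1 + ε * ((lv : ℤ) - 1) ∧ j1 + ε * ((lv : ℤ) - 1) < lw ∧
  ∀ l : ℕ, l < lv → v l = w (j1 + ε * l).toNat

lemma toOcc {lv lw : ℕ} {j1 j2 : ℤ} {v w : ℕ → Bool} (h2 : 2 ≤ lv)
    (h : WordOccursAt lv v lw w j1 j2) :
    ∃ ε : ℤ, (ε = 1 ∨ ε = -1) ∧ j2 = j1 + ε * ((lv : ℤ) - 1) ∧ Occ lv v lw w j1 ε := by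
  obtain ⟨ha1, ha2, hb1, hb2, hne, hdir, hlet⟩ := h
  have hlv : (1 : ℤ) ≤ (lv : ℤ) - 1 := by
    have : (2 : ℤ) ≤ (lv : ℤ) := by exact_mod_cast h2
    linarith
  rcases hdir with hd | hd
  · refine ⟨1, Or.inl rfl, by linarith, ha1, ha2, by linarith, by linarith, ?_⟩
    intro l hl
    have hlt : j1 < j2 := by linarith
    have := hlet l hl
    rw [if_pos hlt] at this
    simpa using this
  · refine ⟨-1, Or.inr rfl, by linarith, ha1, ha2, by linarith, by linarith, ?_⟩
    intro l hl
    have hlt : ¬ j1 < j2 := by linarith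
    have := hlet l hl
    rw [if_neg hlt] at this
    have e : j1 + (-1) * (l : ℤ) = j1 - l := by ring
    rw [e]
    exact this

lemma ofOcc {lv lw : ℕ} {j1 ε : ℤ} {v w : ℕ → Bool} (h2 : 2 ≤ lv)
    (hε : ε = 1 ∨ ε = -1) (h : Occ lv v lw w j1 ε) :
    WordOccursAt lv v lw w j1 (j1 + ε * ((lv : ℤ) - 1)) := by
  obtain ⟨ha1, ha2, hb1, hb2, hlet⟩ := h
  have hlv : (1 : ℤ) ≤ (lv : ℤ) - 1 := by
    have : (2 : ℤ) ≤ (lv : ℤ) := by exact_mod_cast h2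
    linarith
  rcases hε with rfl | rfl
  · have hlt : j1 < j1 + 1 * ((lv : ℤ) - 1) := by linarith
    refine ⟨ha1, ha2, hb1, hb2, ne_of_lt hlt, Or.inl (by ring), ?_⟩
    intro l hl
    rw [if_pos hlt]
    simpa using hlet l hl
  · have hlt : j1 + (-1) * ((lv : ℤ) - 1) < j1 := by linarith
    refine ⟨ha1, ha2, hb1, hb2, (ne_of_lt hlt).symm, Or.inr (by ring), ?_⟩
    intro l hl
    rw [if_neg (not_lt.mpr hlt.le)]
    have e : j1 - (l : ℤ) = j1 + (-1) * l := by ring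
    rw [e]
    exact hlet l hl

lemma compOcc {lv lw lx : ℕ} {i1 ε j1 δ : ℤ} {v w x : ℕ → Bool}
    (hε : ε = 1 ∨ ε = -1) (hδ : δ = 1 ∨ δ = -1)
    (hvw : Occ lv v lw w i1 ε) (hwx : Occ lw w lx x j1 δ) :
    Occ lv v lx x (j1 + δ * i1) (δ * ε) := by
  obtain ⟨hi1, hi1', hi2, hi2', hlvw⟩ := hvw
  obtain ⟨hj1, hj1', hj2, hj2', hlwx⟩ := hwx
  have key : ∀ m : ℤ, 0 ≤ m → m < lw → 0 ≤ j1 + δ * m ∧ j1 + δ * m < lx := by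
    intro m hm hm'
    rcases hδ with rfl | rfl
    · constructor <;> linarith
    · constructor <;> linarith
  refine ⟨(key i1 hi1 hi1').1, (key i1 hi1 hi1').2, ?_, ?_, ?_⟩
  · have e : j1 + δ * i1 + δ * ε * ((lv : ℤ) - 1) = j1 + δ * (i1 + ε * ((lv : ℤ) - 1)) := by
      ring
    rw [e]; exact (key _ hi2 hi2').1
  · have e : j1 + δ * i1 + δ * ε * ((lv : ℤ) - 1) = j1 + δ * (i1 + ε * ((lv : ℤ) - 1)) := by
      ring
    rw [e]; exact (key _ hi2 hi2').2
  · intro l hl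
    have hl' : (l : ℤ) ≤ (lv : ℤ) - 1 := by
      have : (l : ℤ) < (lv : ℤ) := by exact_mod_cast hl
      linarith
    have hl0 : (0 : ℤ) ≤ (l : ℤ) := Int.ofNat_nonneg l
    have hml : 0 ≤ i1 + ε * l ∧ i1 + ε * l < lw := by
      rcases hε with rfl | rfl
      · constructor <;> linarith
      · constructor <;> linarith
    set m : ℤ := i1 + ε * l with hm
    have hmt : ((m.toNat : ℤ)) = m := Int.toNat_of_nonneg hml.1
    have hmlt : m.toNat < lw := by
      have : (m.toNat : ℤ) < (lw : ℤ) := by rw [hmt]; exact hml.2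
      exact_mod_cast this
    rw [hlvw l hl, hlwx m.toNat hmlt]
    congr 1
    have e : j1 + δ * (m.toNat : ℤ) = j1 + δ * i1 + δ * ε * l := by
      rw [hmt, hm]; ring
    rw [e]

lemma mul_pm {a e : ℤ} (ha : a = 1 ∨ a = -1) (he : e = 1 ∨ e = -1) :
    a * e = 1 ∨ a * e = -1 := by
  rcases ha with rfl | rfl <;> rcases he with rfl | rfl <;> simp

/-- If `ζa ≼ ζb ≼ ζc ≼ ζd` are binary words of length at least 2 and `ζa ≼₁ ζd`,
then `ζb ≼₁ ζc`. -/
theorem unique_containment_sandwich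
    (la lb lc ld : ℕ) (a b c d : ℕ → Bool)
    (hla : 2 ≤ la) (hlb : 2 ≤ lb) (hlc : 2 ≤ lc) (hld : 2 ≤ ld)
    (hab : WordContained la a lb b)
    (hbc : WordContained lb b lc c)
    (hcd : WordContained lc c ld d)
    (had : WordUniquelyContained la a ld d) :
    WordUniquelyContained lb b lc c := by
  obtain ⟨ia1, ia2, hab'⟩ := hab
  obtain ⟨ε, hε, -, hOab⟩ := toOcc hla hab'
  obtain ⟨m1, m2, hcd'⟩ := hcd
  obtain ⟨μ, hμ, -, hOcd⟩ := toOcc hlc hcd'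
  obtain ⟨j1, j2, hbc'⟩ := hbc
  obtain ⟨δ, hδ, hj2, hObc⟩ := toOcc hlb hbc'
  obtain ⟨pd, hpd, hpuniq⟩ := had
  have compose : ∀ (q1 δq : ℤ), (δq = 1 ∨ δq = -1) → Occ lb b lc c q1 δq →
      (m1 + μ * (q1 + δq * ia1),
        m1 + μ * (q1 + δq * ia1) + (μ * (δq * ε)) * ((la : ℤ) - 1)) = pd := by
    intro q1 δq hδq hO
    have h1 := compOcc hε hδq hOab hO
    have h2 := compOcc (mul_pm hδq hε) hμ h1 hOcd
    exact hpuniq _ (ofOcc hla (mul_pm hμ (mul_pm hδq hε)) h2)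
  refine ⟨(j1, j2), hbc', ?_⟩
  rintro ⟨q1, q2⟩ hq
  obtain ⟨δ', hδ', hq2, hObc'⟩ := toOcc hlb hq
  have e1 := compose j1 δ hδ hObc
  have e2 := compose q1 δ' hδ' hObc'
  have e := e2.trans e1.symm
  have eK : m1 + μ * (q1 + δ' * ia1) = m1 + μ * (j1 + δ * ia1) :=
    congrArg Prod.fst e
  have eS : m1 + μ * (q1 + δ' * ia1) + (μ * (δ' * ε)) * ((la : ℤ) - 1)
      = m1 + μ * (j1 + δ * ia1) + (μ * (δ * ε)) * ((la : ℤ) - 1) :=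
    congrArg Prod.snd e
  have hla' : (1 : ℤ) ≤ (la : ℤ) - 1 := by
    have : (2 : ℤ) ≤ (la : ℤ) := by exact_mod_cast hla
    linarith
  have hδeq : δ' = δ := by
    rcases hδ with rfl | rfl <;> rcases hδ' with rfl | rfl <;>
      rcases hμ with rfl | rfl <;> rcases hε with rfl | rfl <;>
      first | rfl | (exfalso; rw [eK] at eS; nlinarith)
  subst hδeq
  have hq1 : q1 = j1 := by
    rcases hμ with rfl | rfl <;> linarith [eK]
  subst hq1
  rw [hj2]
  exact Prod.ext rfl hq2
end
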